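/- arXiv:1506.06938 — 10 statements merged into one kernel-verified Lean document; each statement's English description precedes it below -/
import Mathlib

section
/- Let m_d denote Lebesgue measure on ℝ^d and let K ⊂ ℝ^d be a nonempty compact set. Suppose there exist c_K > 0 and γ ∈ (0,1) such that for every open set S ⊂ ℝ^d one has m_d(K + S) ≥ c_K · m_d(S)^{1−γ}. Then for every nonempty compact set E ⊂ ℝ^d, the lower Minkowski dimension satisfies dim_m(K + E) ≥ γ·d + (1−γ)·dim_m(E). -/
open Filter MeasureTheory Metric Set Pointwise

/-- The minimal number of balls of radius `δ` needed to cover `A`. -/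
noncomputable def coverNumber {X : Type*} [PseudoMetricSpace X] (A : Set X) (δ : ℝ) : ℕ :=
  sInf {N : ℕ | ∃ C : Finset X, C.card = N ∧ A ⊆ ⋃ x ∈ C, Metric.ball x δ}

/-- The lower Minkowski dimension of a set: the liminf as `δ → 0⁺` of
`log N(A, δ) / log (1/δ)`. -/
noncomputable def lowerMinkDim {X : Type*} [PseudoMetricSpace X] (A : Set X) : ℝ :=
  liminf (fun δ : ℝ => Real.log (coverNumber A δ) / Real.log (1 / δ)) (nhdsWithin 0 (Set.Ioi 0))

open scoped NNReal Topology

/-!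
Volume comparison sandwiches the `δ`-neighbourhood `A_δ` of a compact set `A` in a
finite-dimensional space: the disjoint `δ/4`-balls around a maximal separated subset give
`N(A, δ) |B(δ/4)| ≤ |A_δ|`, and a minimal cover gives `|A_δ| ≤ N(A, δ) |B(2δ)|`.
Applying the hypothesis to the open set `S = E_δ`, for which `K + S = (K + E)_δ`, gives
`c (N(E, δ) δ^d)^(1-γ) ≲ N(K + E, δ) δ^d`, that is
`log N(K + E, δ) ≥ γ d log (1/δ) + (1 - γ) log N(E, δ) - O(1)`.
Dividing by `log (1/δ)` and taking the liminf gives the claim; the first volume comparison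
also bounds `log N(K + E, δ) / log (1/δ)` from above, which the liminf in `ℝ` needs.
-/

section CoverNumber

variable {X : Type*} [PseudoMetricSpace X] {A : Set X} {δ : ℝ}

lemma coverNumber_le_card {C : Finset X} (hC : A ⊆ ⋃ x ∈ C, ball x δ) :
    coverNumber A δ ≤ C.card :=
  Nat.sInf_le ⟨C, rfl, hC⟩

lemma exists_finset_card_eq_coverNumber (hA : IsCompact A) (hδ : 0 < δ) :
    ∃ C : Finset X, C.card = coverNumber A δ ∧ A ⊆ ⋃ x ∈ C, ball x δ := by
  obtain ⟨t, ht, hAt⟩ := Metric.totallyBounded_iff.1 hA.totallyBounded δ hδ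
  exact Nat.sInf_mem (s := {N | ∃ C : Finset X, C.card = N ∧ A ⊆ ⋃ x ∈ C, ball x δ})
    ⟨ht.toFinset.card, ht.toFinset, rfl, by simpa using hAt⟩

lemma one_le_coverNumber (hA : IsCompact A) (hAne : A.Nonempty) (hδ : 0 < δ) :
    1 ≤ coverNumber A δ := by
  obtain ⟨C, hC, hAC⟩ := exists_finset_card_eq_coverNumber hA hδ
  obtain ⟨a, ha⟩ := hAne
  obtain ⟨x, hx, -⟩ := mem_iUnion₂.1 (hAC ha)
  exact hC ▸ Finset.card_pos.2 ⟨x, hx⟩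

end CoverNumber

lemma exists_finite_isSeparated_isCover {X : Type*} [PseudoEMetricSpace X] {A : Set X}
    (hA : IsCompact A) {ε : ℝ≥0} (hε : ε ≠ 0) :
    ∃ F ⊆ A, F.Finite ∧ IsSeparated ε F ∧ IsCover ε A F := by
  have hpack : packingNumber ε A ≠ ⊤ := by
    obtain ⟨N, -, hN, hAN⟩ :=
      exists_finite_isCover_of_isCompact (ε := ε / 2) (by simpa using hε) hA
    refine ne_top_of_le_ne_top (Set.encard_ne_top_iff.2 hN) ?_
    calc packingNumber ε A = packingNumber (2 * (ε / 2)) A := by rw [mul_div_cancel₀ _ two_ne_zero]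
      _ ≤ externalCoveringNumber (ε / 2) A := packingNumber_two_mul_le_externalCoveringNumber _ A
      _ ≤ N.encard := hAN.externalCoveringNumber_le_encard
  refine ⟨maximalSeparatedSet ε A, maximalSeparatedSet_subset, ?_, isSeparated_maximalSeparatedSet,
    isCover_maximalSeparatedSet hpack⟩
  exact Set.encard_ne_top_iff.1 (encard_maximalSeparatedSet hpack ▸ hpack)

section Haar

variable {V : Type*} [NormedAddCommGroup V] [MeasurableSpace V] (μ : Measure V)
  [μ.IsAddHaarMeasure] {A : Set V} {δ : ℝ}

section Translation

variable [BorelSpace V]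

lemma coverNumber_mul_measure_ball_le (hA : IsCompact A) (hδ : 0 < δ) :
    coverNumber A δ * μ (ball 0 (δ / 4)) ≤ μ (thickening δ A) := by
  obtain ⟨F, hFA, hF, hsep, hcov⟩ :=
    exists_finite_isSeparated_isCover hA (ε := (δ / 2).toNNReal) (by simpa using hδ)
  have hdisj : (F : Set V).PairwiseDisjoint fun x => ball x (δ / 4) := fun x hx y hy hxy => by
    have : ENNReal.ofReal (δ / 2) < ENNReal.ofReal (dist x y) := by
      rw [← edist_dist]; exact hsep hx hy hxy
    have := (ENNReal.ofReal_lt_ofReal_iff_of_nonneg (by positivity)).1 this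
    exact ball_disjoint_ball (by linarith)
  have hAF : A ⊆ ⋃ x ∈ hF.toFinset, ball x δ := by
    refine hcov.subset_iUnion_closedBall.trans (iUnion₂_subset fun x hx => ?_)
    refine (closedBall_subset_ball ?_).trans
      (subset_biUnion_of_mem (u := fun x => ball x δ) (by simpa using hx))
    simp only [Real.coe_toNNReal', max_lt_iff]
    constructor <;> linarith
  calc coverNumber A δ * μ (ball 0 (δ / 4))
      ≤ hF.toFinset.card * μ (ball 0 (δ / 4)) := by gcongr; exact_mod_cast coverNumber_le_card hAF
    _ = ∑ x ∈ hF.toFinset, μ (ball x (δ / 4)) := by simp [Measure.addHaar_ball_center]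
    _ = μ (⋃ x ∈ hF.toFinset, ball x (δ / 4)) :=
      (measure_biUnion_finset (by simpa using hdisj) fun _ _ => measurableSet_ball).symm
    _ ≤ μ (thickening δ A) := measure_mono <| iUnion₂_subset fun x hx =>
      (ball_subset_ball (by linarith)).trans (ball_subset_thickening (hFA (by simpa using hx)) δ)

lemma measure_thickening_le_coverNumber_mul (hA : IsCompact A) (hδ : 0 < δ) :
    μ (thickening δ A) ≤ coverNumber A δ * μ (ball 0 (2 * δ)) := by
  obtain ⟨C, hC, hAC⟩ := exists_finset_card_eq_coverNumber hA hδ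
  have hsub : thickening δ A ⊆ ⋃ x ∈ C, ball x (2 * δ) := fun z hz => by
    obtain ⟨a, ha, hza⟩ := mem_thickening_iff.1 hz
    obtain ⟨x, hx, hax⟩ := mem_iUnion₂.1 (hAC ha)
    exact mem_iUnion₂.2 ⟨x, hx, by rw [mem_ball] at *; linarith [dist_triangle z a x]⟩
  calc μ (thickening δ A) ≤ μ (⋃ x ∈ C, ball x (2 * δ)) := measure_mono hsub
    _ ≤ ∑ x ∈ C, μ (ball x (2 * δ)) := measure_biUnion_finset_le C _
    _ = coverNumber A δ * μ (ball 0 (2 * δ)) := by simp [Measure.addHaar_ball_center, hC]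

end Translation

variable [NormedSpace ℝ V] [FiniteDimensional ℝ V]

lemma measureReal_ball_pos {r : ℝ} (hr : 0 < r) : 0 < μ.real (ball (0 : V) r) :=
  ENNReal.toReal_pos (measure_ball_pos μ 0 hr).ne' measure_ball_lt_top.ne

variable [BorelSpace V]

lemma log_measureReal_ball {r : ℝ} (hr : 0 < r) :
    Real.log (μ.real (ball (0 : V) r)) =
      Module.finrank ℝ V * Real.log r + Real.log (μ.real (ball (0 : V) 1)) := by
  rw [measureReal_def, Measure.addHaar_ball_of_pos μ _ hr, ENNReal.toReal_mul,
    ENNReal.toReal_ofReal (by positivity), ← measureReal_def, Real.log_mul (by positivity)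
    (measureReal_ball_pos μ one_pos).ne', Real.log_pow]

end Haar

lemma tendsto_log_one_div_nhdsGT_zero :
    Tendsto (fun δ : ℝ => Real.log (1 / δ)) (𝓝[>] 0) atTop := by
  simp only [one_div, Real.log_inv]
  exact tendsto_neg_atBot_atTop.comp Real.tendsto_log_nhdsGT_zero

lemma add_mul_liminf_le_liminf {ι : Type*} {l : Filter ι} {f g u : ι → ℝ} {a b : ℝ} (hb : 0 ≤ b)
    (hu : Tendsto u l (𝓝 0)) (hg : IsBoundedUnder (· ≥ ·) l g)
    (hf : IsCoboundedUnder (· ≥ ·) l f) (h : ∀ᶠ x in l, a + b * g x + u x ≤ f x) :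
    a + b * liminf g l ≤ liminf f l := by
  refine le_of_forall_sub_le fun ε hε => le_liminf_of_le hf ?_
  set η := ε / (2 * (b + 1))
  have hη : b * η ≤ ε / 2 := by
    simp only [η]; rw [mul_div_assoc', div_le_div_iff₀ (by positivity) two_pos]; nlinarith
  have hg' : ∀ᶠ x in l, liminf g l - η < g x :=
    eventually_lt_of_lt_liminf (by simp only [η]; linarith [show 0 < η by positivity]) hg
  have hu' : ∀ᶠ x in l, -(ε / 2) < u x := hu.eventually (lt_mem_nhds (by linarith))
  filter_upwards [h, hg', hu'] with x hx hgx hux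
  have := mul_le_mul_of_nonneg_left hgx.le hb
  linarith

lemma add_mul_lowerMinkDim_le {X : Type*} [PseudoMetricSpace X] {A B : Set X} {α β C : ℝ}
    (hβ : 0 ≤ β)
    (hA : IsBoundedUnder (· ≤ ·) (𝓝[>] 0) fun δ => Real.log (coverNumber A δ) / Real.log (1 / δ))
    (h : ∀ δ > 0, α * Real.log (1 / δ) + β * Real.log (coverNumber B δ) + C ≤
      Real.log (coverNumber A δ)) :
    α + β * lowerMinkDim B ≤ lowerMinkDim A := by
  have hL : ∀ᶠ δ in 𝓝[>] (0 : ℝ), 0 < δ ∧ 0 < Real.log (1 / δ) := by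
    filter_upwards [Ioo_mem_nhdsGT one_pos] with δ ⟨hδ0, hδ1⟩
    exact ⟨hδ0, Real.log_pos (one_lt_one_div hδ0 hδ1)⟩
  refine add_mul_liminf_le_liminf hβ (tendsto_log_one_div_nhdsGT_zero.const_div_atTop C)
    (isBoundedUnder_of_eventually_ge (a := 0) ?_) hA.isCoboundedUnder_ge ?_
  · filter_upwards [hL] with δ hδ
    exact div_nonneg (Real.log_natCast_nonneg _) hδ.2.le
  · filter_upwards [hL] with δ ⟨hδ, hLδ⟩
    have : α + β * (Real.log (coverNumber B δ) / Real.log (1 / δ)) + C / Real.log (1 / δ) =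
        (α * Real.log (1 / δ) + β * Real.log (coverNumber B δ) + C) / Real.log (1 / δ) := by
      field_simp
    rw [this]
    exact div_le_div_of_nonneg_right (h δ hδ) hLδ.le

lemma isBoundedUnder_log_coverNumber_div {V : Type*} [NormedAddCommGroup V] [NormedSpace ℝ V]
    [FiniteDimensional ℝ V] {A : Set V} (hA : IsCompact A) (hAne : A.Nonempty) :
    IsBoundedUnder (· ≤ ·) (𝓝[>] 0) fun δ => Real.log (coverNumber A δ) / Real.log (1 / δ) := by
  borelize V
  let μ : Measure V := Measure.addHaar
  obtain ⟨R, hR⟩ := hA.isBounded.subset_ball 0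
  set n : ℝ := (Module.finrank ℝ V : ℝ)
  set M := Real.log (μ.real (ball 0 (R + 1))) - Real.log (μ.real (ball (0 : V) 1)) + n * Real.log 4
  refine ((tendsto_log_one_div_nhdsGT_zero.const_div_atTop M).add_const n).isBoundedUnder_le
    |>.mono_le ?_
  filter_upwards [Ioo_mem_nhdsGT one_pos] with δ ⟨hδ0, hδ1⟩
  have hL : 0 < Real.log (1 / δ) := Real.log_pos (one_lt_one_div hδ0 hδ1)
  have hsub : thickening δ A ⊆ ball 0 (R + 1) := fun z hz => by
    obtain ⟨a, ha, hza⟩ := mem_thickening_iff.1 hz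
    have := hR ha
    rw [mem_ball] at *
    linarith [dist_triangle z a 0]
  have hbound := ENNReal.toReal_mono measure_ball_lt_top.ne
    ((coverNumber_mul_measure_ball_le μ hA hδ0).trans (measure_mono hsub))
  simp only [ENNReal.toReal_mul, ENNReal.toReal_natCast, ← measureReal_def] at hbound
  have hN : (0 : ℝ) < coverNumber A δ := by exact_mod_cast one_le_coverNumber hA hAne hδ0
  have hw := measureReal_ball_pos μ (by positivity : 0 < δ / 4)
  have hlog := Real.log_le_log (by positivity) hbound
  rw [Real.log_mul hN.ne' hw.ne', log_measureReal_ball μ (r := δ / 4) (by positivity),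
    Real.log_div hδ0.ne' four_ne_zero] at hlog
  rw [div_add' _ _ _ hL.ne', div_le_div_iff_of_pos_right hL, one_div, Real.log_inv]
  linear_combination hlog

section Sumset

variable {V : Type*} [NormedAddCommGroup V] [MeasurableSpace V] [BorelSpace V]
  (μ : Measure V) [μ.IsAddHaarMeasure] {K E : Set V} {c γ δ : ℝ}

lemma ofReal_mul_measure_rpow_le_coverNumber_add_mul (hK : IsCompact K) (hE : IsCompact E)
    (hγ : γ ≤ 1) (h : ∀ S : Set V, IsOpen S → ENNReal.ofReal c * μ S ^ (1 - γ) ≤ μ (K + S))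
    (hδ : 0 < δ) :
    ENNReal.ofReal c * (coverNumber E δ * μ (ball 0 (δ / 4))) ^ (1 - γ) ≤
      coverNumber (K + E) δ * μ (ball 0 (2 * δ)) := by
  have : 0 ≤ 1 - γ := sub_nonneg.2 hγ
  calc ENNReal.ofReal c * (coverNumber E δ * μ (ball 0 (δ / 4))) ^ (1 - γ)
      ≤ ENNReal.ofReal c * μ (thickening δ E) ^ (1 - γ) := by
        gcongr; exact coverNumber_mul_measure_ball_le μ hE hδ
    _ ≤ μ (K + thickening δ E) := h _ isOpen_thickening
    _ = μ (thickening δ (K + E)) := by rw [← add_ball_zero, ← add_ball_zero, add_assoc]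
    _ ≤ coverNumber (K + E) δ * μ (ball 0 (2 * δ)) :=
      measure_thickening_le_coverNumber_mul μ (hK.add hE) hδ

variable [NormedSpace ℝ V] [FiniteDimensional ℝ V]

lemma exists_add_le_log_coverNumber_add (hK : IsCompact K) (hE : IsCompact E)
    (hEne : E.Nonempty) (hc : 0 < c) (hγ : γ ≤ 1)
    (h : ∀ S : Set V, IsOpen S → ENNReal.ofReal c * μ S ^ (1 - γ) ≤ μ (K + S)) :
    ∃ C : ℝ, ∀ δ > 0, γ * Module.finrank ℝ V * Real.log (1 / δ) +
      (1 - γ) * Real.log (coverNumber E δ) + C ≤ Real.log (coverNumber (K + E) δ) := by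
  set n : ℝ := (Module.finrank ℝ V : ℝ)
  set v := Real.log (μ.real (ball (0 : V) 1))
  refine ⟨Real.log c + (1 - γ) * (v - n * Real.log 4) - n * Real.log 2 - v, fun δ hδ => ?_⟩
  have hNE : (0 : ℝ) < coverNumber E δ := by exact_mod_cast one_le_coverNumber hE hEne hδ
  have hw₁ := measureReal_ball_pos μ (by positivity : 0 < δ / 4)
  have hw₂ := measureReal_ball_pos μ (by positivity : 0 < 2 * δ)
  have hbound := ENNReal.toReal_mono (by finiteness)
    (ofReal_mul_measure_rpow_le_coverNumber_add_mul μ hK hE hγ h hδ)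
  simp only [ENNReal.toReal_mul, ← ENNReal.toReal_rpow, ENNReal.toReal_ofReal hc.le,
    ENNReal.toReal_natCast, ← measureReal_def] at hbound
  have hpos : 0 < c * (coverNumber E δ * μ.real (ball 0 (δ / 4))) ^ (1 - γ) := by positivity
  have hNKE : (coverNumber (K + E) δ : ℝ) ≠ 0 := by
    intro h0
    rw [h0, zero_mul] at hbound
    linarith
  have hlog := Real.log_le_log hpos hbound
  rw [Real.log_mul hc.ne' (by positivity), Real.log_rpow (by positivity),
    Real.log_mul hNE.ne' hw₁.ne', Real.log_mul hNKE hw₂.ne',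
    log_measureReal_ball μ (r := δ / 4) (by positivity),
    log_measureReal_ball μ (r := 2 * δ) (by positivity), Real.log_div hδ.ne' four_ne_zero,
    Real.log_mul two_ne_zero hδ.ne'] at hlog
  rw [one_div, Real.log_inv]
  linear_combination hlog

end Sumset

theorem stmt1_general (d : ℕ) (K : Set (EuclideanSpace ℝ (Fin d)))
    (hKne : K.Nonempty) (hKc : IsCompact K)
    (c γ : ℝ) (hc : 0 < c) (hγ : γ ∈ Set.Ioo (0 : ℝ) 1)
    (h : ∀ S : Set (EuclideanSpace ℝ (Fin d)), IsOpen S →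
      ENNReal.ofReal c * volume S ^ (1 - γ) ≤ volume (K + S))
    (E : Set (EuclideanSpace ℝ (Fin d))) (hEne : E.Nonempty) (hEc : IsCompact E) :
    γ * d + (1 - γ) * lowerMinkDim E ≤ lowerMinkDim (K + E) := by
  obtain ⟨C, hC⟩ := exists_add_le_log_coverNumber_add volume hKc hEc hEne hc hγ.2.le h
  rw [finrank_euclideanSpace_fin] at hC
  exact add_mul_lowerMinkDim_le (sub_nonneg.2 hγ.2.le)
    (isBoundedUnder_log_coverNumber_div (hKc.add hEc) (hKne.add hEne)) hC

theorem stmt1 (d : ℕ) (hd : 1 ≤ d) (K : Set (EuclideanSpace ℝ (Fin d)))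
    (hKne : K.Nonempty) (hKc : IsCompact K)
    (c γ : ℝ) (hc : 0 < c) (hγ : γ ∈ Set.Ioo (0 : ℝ) 1)
    (h : ∀ S : Set (EuclideanSpace ℝ (Fin d)), IsOpen S →
      ENNReal.ofReal c * volume S ^ (1 - γ) ≤ volume (K + S))
    (E : Set (EuclideanSpace ℝ (Fin d))) (hEne : E.Nonempty) (hEc : IsCompact E) :
    γ * d + (1 - γ) * lowerMinkDim E ≤ lowerMinkDim (K + E) :=
  stmt1_general d K hKne hKc c γ hc hγ h E hEne hEc
end

section
/- Let G be an abelian group and let K, S ⊂ G be finite nonempty sets. Then for every positive integer k, |{(x_0 − x_1, x_0 − x_2, …, x_0 − x_k) : x_0, x_1, …, x_k ∈ K}|^{1/(k+1)} · |S|^{1 − k/(k+1)} ≤ |K + S|, where |·| denotes cardinality. -/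
/-!
If `v = (x₀ - x₁, …, x₀ - xₖ)` with all `xᵢ ∈ K` and `s ∈ S`, then the tuple
`(x₀ + s, x₁ + s, …, xₖ + s)` lies in `(K + S)^(k+1)`, and both `v` (from differences of entries)
and then `s` can be read back off it. Hence `|V| |S| ≤ |K + S|^(k+1)` for the set `V` of such `v`,
and taking `(k+1)`-th roots gives the inequality.
-/

open Pointwise

section

variable {G : Type*} [AddCommGroup G]

def differenceTuples (K : Set G) (k : ℕ) : Set (Fin k → G) :=
  {v | ∃ x₀ ∈ K, ∃ x : Fin k → G, (∀ i, x i ∈ K) ∧ v = fun i => x₀ - x i}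

theorem mem_differenceTuples {K : Set G} {k : ℕ} {v : Fin k → G} :
    v ∈ differenceTuples K k ↔ ∃ x₀ ∈ K, ∀ i, x₀ - v i ∈ K := by
  constructor
  · rintro ⟨x₀, hx₀, x, hx, rfl⟩
    exact ⟨x₀, hx₀, fun i => by simpa using hx i⟩
  · rintro ⟨x₀, hx₀, hv⟩
    exact ⟨x₀, hx₀, fun i => x₀ - v i, hv, by simp⟩

theorem natCard_differenceTuples_mul_card_le [DecidableEq G] (K S : Finset G) (k : ℕ) :
    Nat.card (differenceTuples (K : Set G) k) * S.card ≤ (K + S).card ^ (k + 1) := by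
  choose base hbase hdiff using fun v : differenceTuples (K : Set G) k =>
    mem_differenceTuples.mp v.2
  let F : differenceTuples (K : Set G) k × S → Fin (k + 1) → (K + S : Finset G) :=
    fun p => Fin.cons ⟨base p.1 + p.2, Finset.add_mem_add (hbase p.1) p.2.2⟩
      fun i => ⟨base p.1 - p.1.1 i + p.2, Finset.add_mem_add (hdiff p.1 i) p.2.2⟩
  have hF : Function.Injective F := by
    rintro ⟨v, s⟩ ⟨w, t⟩ h
    obtain ⟨h₀, hi⟩ := Fin.cons_injective2 h
    simp only [Subtype.ext_iff] at h₀
    have hvw : v = w := by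
      ext i
      have := congrArg Subtype.val (congrFun hi i)
      dsimp only at this
      simpa using congrArg₂ (· - ·) h₀ this
    subst hvw
    exact Prod.ext rfl (Subtype.ext (add_left_cancel h₀))
  simpa [Nat.card_prod, Fintype.card_fun] using Nat.card_le_card_of_injective F hF

end

theorem rpow_mul_rpow_le_of_mul_le_pow {a b c : ℝ} (ha : 0 ≤ a) (hb : 0 ≤ b) (hc : 0 ≤ c)
    (n : ℕ) (h : a * b ≤ c ^ (n + 1)) :
    a ^ ((1 : ℝ) / (n + 1)) * b ^ (1 - (n : ℝ) / (n + 1)) ≤ c := by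
  have hexp : 1 - (n : ℝ) / (n + 1) = 1 / (n + 1) := by field_simp; ring
  rw [hexp, ← Real.mul_rpow ha hb]
  calc (a * b) ^ ((1 : ℝ) / (n + 1)) ≤ (c ^ (n + 1)) ^ ((1 : ℝ) / (n + 1)) := by gcongr
    _ = c := by
      rw [← Real.rpow_natCast, ← Real.rpow_mul hc, Nat.cast_add_one, mul_one_div_cancel (by positivity), Real.rpow_one]

theorem stmt2_general {G : Type*} [AddCommGroup G] [DecidableEq G]
    (K S : Finset G) (k : ℕ) :
    (Nat.card {v : Fin k → G | ∃ x₀ ∈ (K : Set G), ∃ x : Fin k → G,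
        (∀ i, x i ∈ (K : Set G)) ∧ v = fun i => x₀ - x i} : ℝ) ^ ((1 : ℝ) / (k + 1))
      * (S.card : ℝ) ^ (1 - (k : ℝ) / (k + 1)) ≤ ((K + S).card : ℝ) :=
  rpow_mul_rpow_le_of_mul_le_pow (Nat.cast_nonneg _) (Nat.cast_nonneg _) (Nat.cast_nonneg _) k
    (mod_cast natCard_differenceTuples_mul_card_le K S k)

theorem stmt2 {G : Type*} [AddCommGroup G] [DecidableEq G]
    (K S : Finset G) (hK : K.Nonempty) (hS : S.Nonempty) (k : ℕ) (hk : 1 ≤ k) :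
    (Nat.card {v : Fin k → G | ∃ x₀ ∈ (K : Set G), ∃ x : Fin k → G,
        (∀ i, x i ∈ (K : Set G)) ∧ v = fun i => x₀ - x i} : ℝ) ^ ((1 : ℝ) / (k + 1))
      * (S.card : ℝ) ^ (1 - (k : ℝ) / (k + 1)) ≤ ((K + S).card : ℝ) :=
  stmt2_general K S k
end

section
/- Let G be an abelian group and let K, S ⊂ G be finite nonempty sets. Fix an integer k ≥ 2 and signs ε_2, …, ε_k ∈ {+1, −1}. Then |K + ε_2·K + ε_3·K + ⋯ + ε_k·K|^{1/k} · |S|^{1 − 1/k} ≤ |K + S|, where K + ε_2·K + ⋯ + ε_k·K denotes the set of all sums x_1 + ε_2 x_2 + ⋯ + ε_k x_k with each x_i ∈ K, and |·| denotes cardinality. -/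
/-!
Splitting the signs into the `m` indices with `ε i = 1` and the `n = k - m` others puts every
signed sum in `m • K - n • K`. The Plünnecke–Ruzsa inequality bounds
`|m • K - n • K| ≤ (|S + K| / |S|) ^ (m + n) * |S|`, and taking `k`-th roots gives the claim.
-/

open Pointwise Finset

section

variable {G : Type*} [DecidableEq G]

theorem Finset.sum_mem_card_nsmul [AddCommMonoid G] {ι : Type*} (s : Finset ι) {K : Finset G}
    {x : ι → G} (hx : ∀ i ∈ s, x i ∈ K) : ∑ i ∈ s, x i ∈ #s • K := by
  rw [← mem_coe, coe_nsmul, ← sum_const]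
  exact Set.finsetSum_mem_finsetSum _ _ _ hx

variable [AddCommGroup G] {ι : Type*} [Fintype ι]

theorem sum_sign_smul_mem_nsmul_sub_nsmul {ε : ι → ℤ} (hε : ∀ i, ε i = 1 ∨ ε i = -1)
    {K : Finset G} {x : ι → G} (hx : ∀ i, x i ∈ K) :
    ∑ i, ε i • x i ∈ #{i | ε i = 1} • K - #{i | ε i ≠ 1} • K := by
  have hsplit : ∑ i, ε i • x i = ∑ i with ε i = 1, x i - ∑ i with ε i ≠ 1, x i := by
    rw [← sum_filter_add_sum_filter_not univ (ε · = 1), sub_eq_add_neg, ← sum_neg_distrib]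
    congr 1 <;> refine sum_congr rfl fun i hi => ?_
    · simp [(mem_filter.mp hi).2]
    · simp [(hε i).resolve_left (mem_filter.mp hi).2]
  rw [hsplit]
  exact sub_mem_sub (sum_mem_card_nsmul _ fun i _ => hx i) (sum_mem_card_nsmul _ fun i _ => hx i)

theorem natCard_setOf_sum_zsmul_le {ε : ι → ℤ} (hε : ∀ i, ε i = 1 ∨ ε i = -1) (K : Finset G) :
    Nat.card {g : G | ∃ x : ι → G, (∀ i, x i ∈ (K : Set G)) ∧ g = ∑ i, ε i • x i}
      ≤ #(#{i | ε i = 1} • K - #{i | ε i ≠ 1} • K) := by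
  refine (Nat.card_mono (finite_toSet _) ?_).trans_eq (Nat.card_eq_finsetCard _)
  rintro g ⟨x, hx, rfl⟩
  exact sum_sign_smul_mem_nsmul_sub_nsmul hε hx

theorem card_nsmul_sub_nsmul_mul_pow_le {S : Finset G} (hS : S.Nonempty) (K : Finset G) (m n : ℕ) :
    #(m • K - n • K) * #S ^ (m + n) ≤ #(K + S) ^ (m + n) * #S := by
  have hPR := pluennecke_ruzsa_inequality_nsmul_sub_nsmul_add hS K m n
  have hS0 : (#S : ℚ≥0) ≠ 0 := by exact_mod_cast hS.card_pos.ne'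
  suffices h : (#(m • K - n • K) * #S ^ (m + n) : ℚ≥0) ≤ #(S + K) ^ (m + n) * #S by
    rw [add_comm K S]; exact_mod_cast h
  calc (#(m • K - n • K) * #S ^ (m + n) : ℚ≥0)
      ≤ (#(S + K) / #S : ℚ≥0) ^ (m + n) * #S * #S ^ (m + n) := by gcongr
    _ = #(S + K) ^ (m + n) * #S := by
      rw [div_pow, mul_right_comm, div_mul_cancel₀ _ (pow_ne_zero _ hS0)]

end

theorem rpow_inv_mul_rpow_one_sub_inv_le {a s c : ℝ} {k : ℕ} (ha : 0 ≤ a) (hs : 0 < s)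
    (hc : 0 ≤ c) (hk : k ≠ 0) (h : a * s ^ k ≤ c ^ k * s) :
    a ^ (1 / k : ℝ) * s ^ (1 - 1 / k : ℝ) ≤ c := by
  have hk' : (k : ℝ) ≠ 0 := by exact_mod_cast hk
  rw [← pow_le_pow_iff_left₀ (by positivity) hc hk, mul_pow, ← Real.rpow_natCast,
    ← Real.rpow_natCast, ← Real.rpow_mul ha, ← Real.rpow_mul hs.le, one_div_mul_cancel hk',
    Real.rpow_one, sub_mul, one_div_mul_cancel hk', one_mul, Real.rpow_sub_one hs.ne',
    Real.rpow_natCast, ← mul_div_assoc, div_le_iff₀ hs]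
  exact h

theorem stmt3 {G : Type*} [AddCommGroup G] [DecidableEq G]
    (K S : Finset G) (hS : S.Nonempty)
    (k : ℕ) (hk : 2 ≤ k) (ε : Fin k → ℤ)
    (hε : ∀ i, ε i = 1 ∨ ε i = -1) :
    (Nat.card {g : G | ∃ x : Fin k → G, (∀ i, x i ∈ (K : Set G)) ∧
        g = ∑ i, ε i • x i} : ℝ) ^ ((1 : ℝ) / k)
      * (S.card : ℝ) ^ (1 - 1 / (k : ℝ)) ≤ ((K + S).card : ℝ) := by
  have hmn : #{i | ε i = 1} + #{i | ε i ≠ 1} = k := by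
    rw [card_filter_add_card_filter_not, card_univ, Fintype.card_fin]
  have hPR := card_nsmul_sub_nsmul_mul_pow_le hS K #{i | ε i = 1} #{i | ε i ≠ 1}
  rw [hmn] at hPR
  refine rpow_inv_mul_rpow_one_sub_inv_le (by positivity) (by exact_mod_cast hS.card_pos)
    (by positivity) (by omega) ?_
  calc (Nat.card {g : G | ∃ x : Fin k → G, (∀ i, x i ∈ (K : Set G)) ∧
        g = ∑ i, ε i • x i} : ℝ) * #S ^ k
      ≤ #(#{i | ε i = 1} • K - #{i | ε i ≠ 1} • K) * #S ^ k := by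
        gcongr; exact_mod_cast natCard_setOf_sum_zsmul_le hε K
    _ ≤ #(K + S) ^ k * #S := by exact_mod_cast hPR
end

section
/- For every d ≥ 1 there is a positive constant C_d such that if K ⊂ ℝ^d is compact and S ⊂ ℝ^d is open, then for every integer k ≥ 2 and every choice of signs ε_2, …, ε_k ∈ {+1, −1}, m_d(K + ε_2·K + ⋯ + ε_k·K)^{1/k} · m_d(S)^{1 − 1/k} ≤ C_d · m_d(K + S), where K + ε_2·K + ⋯ + ε_k·K denotes the set of sums x_1 + ε_2 x_2 + ⋯ + ε_k x_k with each x_i ∈ K, and m_d denotes Lebesgue measure on ℝ^d. -/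
/-!
Cut `ℝ^ι` into half-open cubes of side `δ` and, for a compact `C ⊆ S`, let `A` and `B` be the
sets of cube indices met by `C` and by `K`; write `d = |ι|`. Then `vol C ≤ |A| δ^d`, and when `δ`
is small compared with the distance from `C` to `Sᶜ`, every cube indexed by `A + B` lies in
`K + S`, so `|A + B| δ^d ≤ vol (K + S)`. Each point of `Σ = K ± ⋯ ± K` lies within
sup-distance `kδ` of `δ w` for some `w ∈ m • B - n • B` (`m`, `n` the numbers of signs `+1`, `-1`),
so `vol Σ ≤ |m • B - n • B| (2kδ)^d`. The Plünnecke–Ruzsa inequality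
`|m • B - n • B| |A|^(k-1) ≤ |A + B|^k` then gives `vol Σ (vol C)^(k-1) ≤ (2k)^d vol (K + S)^k`;
inner regularity replaces `C` by `S`, and `(2k)^(d/k) ≤ 2^d`. The sup metric on `ℝ^ι` only serves
the covering arguments: `EuclideanSpace.equiv` is measure preserving, so the bound transfers to
Euclidean space.
-/

open MeasureTheory Set Pointwise Metric
open scoped ENNReal

section Additive

variable {G : Type*} [AddCommGroup G] [DecidableEq G]

lemma Finset.sum_mem_card_nsmul_s5 {κ : Type*} (B : Finset G) (P : Finset κ) {z : κ → G}
    (hz : ∀ i ∈ P, z i ∈ B) : ∑ i ∈ P, z i ∈ P.card • B := by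
  rw [← Finset.mem_coe, Finset.coe_nsmul, ← Finset.sum_const]
  exact Set.finsetSum_mem_finsetSum P _ z hz

lemma exists_sum_zsmul_mem_nsmul_sub_nsmul {κ : Type*} [Fintype κ] {ε : κ → ℤ}
    (hε : ∀ i, ε i = 1 ∨ ε i = -1) (B : Finset G) :
    ∃ m n : ℕ, m + n = Fintype.card κ ∧
      ∀ z : κ → G, (∀ i, z i ∈ B) → ∑ i, ε i • z i ∈ m • B - n • B := by
  classical
  set P := Finset.univ.filter fun i => ε i = 1
  set N := Finset.univ.filter fun i => ¬ε i = 1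
  refine ⟨P.card, N.card, Finset.card_filter_add_card_filter_not _, fun z hz => ?_⟩
  have hsplit : ∑ i, ε i • z i = ∑ i ∈ P, z i - ∑ i ∈ N, z i := by
    rw [← Finset.sum_filter_add_sum_filter_not Finset.univ (fun i => ε i = 1), sub_eq_add_neg,
      ← Finset.sum_neg_distrib]
    congr 1 <;> refine Finset.sum_congr rfl fun i hi => ?_
    · rw [(Finset.mem_filter.1 hi).2, one_smul]
    · rw [(hε i).resolve_left (Finset.mem_filter.1 hi).2, neg_one_zsmul]
  rw [hsplit]
  exact Finset.sub_mem_sub (B.sum_mem_card_nsmul_s5 P fun i _ => hz i)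
    (B.sum_mem_card_nsmul_s5 N fun i _ => hz i)

lemma Finset.card_nsmul_sub_nsmul_mul_pow_le {A B : Finset G} (hA : A.Nonempty) {m n : ℕ}
    (hmn : m + n ≠ 0) :
    (m • B - n • B).card * A.card ^ (m + n - 1) ≤ (A + B).card ^ (m + n) := by
  have hA0 : (A.card : ℚ≥0) ≠ 0 := by simpa using hA.card_ne_zero
  rw [← Nat.cast_le (α := ℚ≥0)]
  push_cast
  calc ((m • B - n • B).card : ℚ≥0) * (A.card : ℚ≥0) ^ (m + n - 1)
      ≤ ((A + B).card / A.card : ℚ≥0) ^ (m + n) * A.card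
          * (A.card : ℚ≥0) ^ (m + n - 1) := by
        gcongr
        exact Finset.pluennecke_ruzsa_inequality_nsmul_sub_nsmul_add hA B m n
    _ = ((A + B).card : ℚ≥0) ^ (m + n) := by
        rw [div_pow, mul_assoc, ← pow_succ', Nat.sub_add_cancel (Nat.one_le_iff_ne_zero.2 hmn),
          div_mul_cancel₀ _ (pow_ne_zero _ hA0)]

end Additive

def signedSumset {E : Type*} [AddCommGroup E] {k : ℕ} (ε : Fin k → ℤ) (K : Set E) : Set E :=
  {g | ∃ x : Fin k → E, (∀ i, x i ∈ K) ∧ g = ∑ i, ε i • x i}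

lemma image_signedSumset {E F 𝓕 : Type*} [AddCommGroup E] [AddCommGroup F] [FunLike 𝓕 E F]
    [AddMonoidHomClass 𝓕 E F] (f : 𝓕) {k : ℕ} (ε : Fin k → ℤ) (K : Set E) :
    f '' signedSumset ε K = signedSumset ε (f '' K) := by
  ext g
  constructor
  · rintro ⟨_, ⟨x, hx, rfl⟩, rfl⟩
    exact ⟨fun i => f (x i), fun i => mem_image_of_mem f (hx i), by simp [map_sum, map_zsmul]⟩
  · rintro ⟨y, hy, rfl⟩
    choose x hx hxy using hy
    exact ⟨∑ i, ε i • x i, ⟨x, hx, rfl⟩, by simp [map_sum, map_zsmul, hxy]⟩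

section Grid

variable {ι : Type*}

noncomputable def gridIndex (δ : ℝ) (x : ι → ℝ) : ι → ℤ := fun i => ⌊x i / δ⌋

def gridPoint (δ : ℝ) : (ι → ℤ) →+ (ι → ℝ) :=
  AddMonoidHom.mk' (fun z i => δ * z i) fun a b => by ext; simp [mul_add]

lemma gridIndex_monotone {δ : ℝ} (hδ : 0 < δ) : Monotone (gridIndex (ι := ι) δ) :=
  fun _ _ h i => Int.floor_mono (div_le_div_of_nonneg_right (h i) hδ.le)

lemma preimage_gridIndex_singleton {δ : ℝ} (hδ : 0 < δ) (z : ι → ℤ) :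
    gridIndex δ ⁻¹' {z} = univ.pi fun i => Ico (gridPoint δ z i) (gridPoint δ z i + δ) := by
  ext x
  simp only [mem_preimage, mem_singleton_iff, funext_iff, gridIndex, Int.floor_eq_iff,
    le_div_iff₀ hδ, div_lt_iff₀ hδ, mem_pi, mem_univ, true_implies, mem_Ico, gridPoint,
    AddMonoidHom.mk'_apply]
  exact forall_congr' fun i => by rw [add_one_mul, mul_comm]

variable [Fintype ι]

lemma volume_preimage_gridIndex_singleton {δ : ℝ} (hδ : 0 < δ) (z : ι → ℤ) :
    volume (gridIndex δ ⁻¹' {z}) = ENNReal.ofReal δ ^ Fintype.card ι := by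
  simp [preimage_gridIndex_singleton hδ, Real.volume_pi_Ico]

lemma measurableSet_preimage_gridIndex_singleton {δ : ℝ} (hδ : 0 < δ) (z : ι → ℤ) :
    MeasurableSet (gridIndex δ ⁻¹' {z}) := by
  rw [preimage_gridIndex_singleton hδ]
  exact .univ_pi fun _ => measurableSet_Ico

lemma norm_sub_gridPoint_gridIndex_le {δ : ℝ} (hδ : 0 < δ) (x : ι → ℝ) :
    ‖x - gridPoint δ (gridIndex δ x)‖ ≤ δ := by
  have hx : x ∈ gridIndex δ ⁻¹' {gridIndex δ x} := rfl
  rw [preimage_gridIndex_singleton hδ] at hx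
  refine (pi_norm_le_iff_of_nonneg hδ.le).2 fun i => ?_
  have hxi := hx i (mem_univ i)
  rw [Pi.sub_apply, Real.norm_eq_abs, abs_le]
  constructor <;> linarith [hxi.1, hxi.2]

lemma Bornology.IsBounded.finite_image_gridIndex {T : Set (ι → ℝ)}
    (hT : Bornology.IsBounded T) {δ : ℝ} (hδ : 0 < δ) : (gridIndex δ '' T).Finite := by
  classical
  obtain ⟨⟨a, ha⟩, ⟨b, hb⟩⟩ := isBounded_iff_bddBelow_bddAbove.1 hT
  exact (finite_Icc (gridIndex δ a) (gridIndex δ b)).subset <|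
    image_subset_iff.2 fun _ hx =>
      ⟨gridIndex_monotone hδ (ha hx), gridIndex_monotone hδ (hb hx)⟩

lemma volume_le_card_mul_of_image_gridIndex_subset {δ : ℝ} (hδ : 0 < δ) {T : Set (ι → ℝ)}
    {F : Finset (ι → ℤ)} (hT : gridIndex δ '' T ⊆ F) :
    volume T ≤ F.card * ENNReal.ofReal δ ^ Fintype.card ι :=
  calc volume T ≤ volume (⋃ z ∈ F, gridIndex δ ⁻¹' {z}) :=
        measure_mono fun x hx => mem_biUnion (hT (mem_image_of_mem _ hx)) rfl
    _ ≤ ∑ z ∈ F, volume (gridIndex δ ⁻¹' {z}) := measure_biUnion_finset_le F _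
    _ = F.card * ENNReal.ofReal δ ^ Fintype.card ι := by
        simp [volume_preimage_gridIndex_singleton hδ]

lemma card_mul_le_volume_of_preimage_gridIndex_subset {δ : ℝ} (hδ : 0 < δ)
    {T : Set (ι → ℝ)} {F : Finset (ι → ℤ)} (hT : ∀ z ∈ F, gridIndex δ ⁻¹' {z} ⊆ T) :
    F.card * ENNReal.ofReal δ ^ Fintype.card ι ≤ volume T :=
  calc (F.card : ℝ≥0∞) * ENNReal.ofReal δ ^ Fintype.card ι
      = ∑ z ∈ F, volume (gridIndex δ ⁻¹' {z}) := by
        simp [volume_preimage_gridIndex_singleton hδ]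
    _ = volume (⋃ z ∈ F, gridIndex δ ⁻¹' {z}) :=
        (measure_biUnion_finset (pairwiseDisjoint_fiber _ _) fun z _ =>
          measurableSet_preimage_gridIndex_singleton hδ z).symm
    _ ≤ volume T := measure_mono (iUnion₂_subset hT)

lemma exists_signedSumset_subset_biUnion_closedBall {δ : ℝ} (hδ : 0 < δ) {K : Set (ι → ℝ)}
    {B : Finset (ι → ℤ)} (hB : gridIndex δ '' K ⊆ B) {k : ℕ} {ε : Fin k → ℤ}
    (hε : ∀ i, ε i = 1 ∨ ε i = -1) :
    ∃ m n : ℕ, m + n = k ∧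
      signedSumset ε K ⊆ ⋃ w ∈ m • B - n • B, closedBall (gridPoint δ w) (k * δ) := by
  obtain ⟨m, n, hmn, hmem⟩ := exists_sum_zsmul_mem_nsmul_sub_nsmul hε B
  refine ⟨m, n, by simpa using hmn, ?_⟩
  rintro _ ⟨x, hx, rfl⟩
  refine mem_biUnion (hmem _ fun i => hB (mem_image_of_mem _ (hx i))) ?_
  rw [mem_closedBall, dist_eq_norm, map_sum]
  simp only [map_zsmul, ← Finset.sum_sub_distrib, ← smul_sub]
  calc ‖∑ i, ε i • (x i - gridPoint δ (gridIndex δ (x i)))‖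
      ≤ ∑ i, ‖ε i • (x i - gridPoint δ (gridIndex δ (x i)))‖ := norm_sum_le _ _
    _ ≤ ∑ _i : Fin k, δ := Finset.sum_le_sum fun i _ => by
        have hεi : ‖(ε i : ℝ)‖ = 1 := by rcases hε i with h | h <;> simp [h]
        rw [norm_zsmul ℝ, hεi, one_mul]
        exact norm_sub_gridPoint_gridIndex_le hδ _
    _ = k * δ := by simp

lemma exists_volume_signedSumset_le_card_mul {δ : ℝ} (hδ : 0 < δ) {K : Set (ι → ℝ)}
    {B : Finset (ι → ℤ)} (hB : gridIndex δ '' K ⊆ B) {k : ℕ} {ε : Fin k → ℤ}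
    (hε : ∀ i, ε i = 1 ∨ ε i = -1) :
    ∃ m n : ℕ, m + n = k ∧ volume (signedSumset ε K) ≤
      (m • B - n • B).card * ((2 * k) ^ Fintype.card ι * ENNReal.ofReal δ ^ Fintype.card ι) := by
  obtain ⟨m, n, hmn, hcover⟩ := exists_signedSumset_subset_biUnion_closedBall hδ hB hε
  refine ⟨m, n, hmn, ?_⟩
  have hball (w : ι → ℤ) : volume (closedBall (gridPoint δ w) (k * δ))
      = (2 * k) ^ Fintype.card ι * ENNReal.ofReal δ ^ Fintype.card ι := by
    rw [Real.volume_pi_closedBall _ (by positivity), ← mul_assoc,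
      ENNReal.ofReal_pow (by positivity), ENNReal.ofReal_mul (by positivity), mul_pow]
    norm_num
  calc volume (signedSumset ε K)
      ≤ ∑ w ∈ m • B - n • B, volume (closedBall (gridPoint δ w) (k * δ)) :=
        (measure_mono hcover).trans (measure_biUnion_finset_le _ _)
    _ = _ := by simp [hball]

lemma preimage_gridIndex_add_subset_add {δ : ℝ} (hδ : 0 < δ) {C K S : Set (ι → ℝ)}
    (hCS : cthickening (3 * δ) C ⊆ S) {a b : ι → ℤ} (ha : a ∈ gridIndex δ '' C)
    (hb : b ∈ gridIndex δ '' K) : gridIndex δ ⁻¹' {a + b} ⊆ K + S := by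
  obtain ⟨c, hc, rfl⟩ := ha
  obtain ⟨y, hy, rfl⟩ := hb
  intro x (hx : gridIndex δ x = gridIndex δ c + gridIndex δ y)
  have hxy : x - y ∈ S := by
    refine hCS (mem_cthickening_of_dist_le _ c _ _ hc ?_)
    have hdecomp : x - y - c = (x - gridPoint δ (gridIndex δ x))
        - (y - gridPoint δ (gridIndex δ y)) - (c - gridPoint δ (gridIndex δ c)) := by
      rw [hx, map_add]
      abel
    have h := norm_sub_gridPoint_gridIndex_le (ι := ι) hδ
    rw [dist_eq_norm, hdecomp]
    calc _ ≤ ‖x - gridPoint δ (gridIndex δ x)‖ + ‖y - gridPoint δ (gridIndex δ y)‖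
          + ‖c - gridPoint δ (gridIndex δ c)‖ :=
          (norm_sub_le _ _).trans (by gcongr; exact norm_sub_le _ _)
      _ ≤ 3 * δ := by linarith [h x, h y, h c]
  exact ⟨y, hy, x - y, hxy, add_sub_cancel y x⟩

theorem volume_signedSumset_mul_volume_pow_le_of_cthickening_subset
    {K C S : Set (ι → ℝ)} (hK : Bornology.IsBounded K) (hC : Bornology.IsBounded C)
    {δ : ℝ} (hδ : 0 < δ) (hCS : cthickening (3 * δ) C ⊆ S) {k : ℕ} (hk : 2 ≤ k)
    {ε : Fin k → ℤ} (hε : ∀ i, ε i = 1 ∨ ε i = -1) :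
    volume (signedSumset ε K) * volume C ^ (k - 1)
      ≤ (2 * k) ^ Fintype.card ι * volume (K + S) ^ k := by
  classical
  rcases C.eq_empty_or_nonempty with rfl | hCne
  · simp [zero_pow (by omega : k - 1 ≠ 0)]
  set e := ENNReal.ofReal δ ^ Fintype.card ι
  set A := (hC.finite_image_gridIndex hδ).toFinset
  set B := (hK.finite_image_gridIndex hδ).toFinset
  have hA : A.Nonempty := by simpa [A] using hCne
  obtain ⟨m, n, hmn, hsum⟩ :=
    exists_volume_signedSumset_le_card_mul hδ (K := K) (B := B) (by simp [B]) hε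
  have hCA : volume C ≤ A.card * e :=
    volume_le_card_mul_of_image_gridIndex_subset hδ (by simp [A])
  have hKS : ((A + B).card : ℝ≥0∞) * e ≤ volume (K + S) :=
    card_mul_le_volume_of_preimage_gridIndex_subset hδ fun w hw => by
      obtain ⟨a, ha, b, hb, rfl⟩ := Finset.mem_add.1 hw
      exact preimage_gridIndex_add_subset_add hδ hCS (by simpa [A] using ha)
        (by simpa [B] using hb)
  have hPR := Finset.card_nsmul_sub_nsmul_mul_pow_le hA (B := B) (by omega : m + n ≠ 0)
  rw [hmn] at hPR
  calc volume (signedSumset ε K) * volume C ^ (k - 1)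
      ≤ (m • B - n • B).card * ((2 * k) ^ Fintype.card ι * e) * (A.card * e) ^ (k - 1) := by
        gcongr
    _ = (2 * k) ^ Fintype.card ι
          * (((m • B - n • B).card * A.card ^ (k - 1) : ℕ) * e ^ k) := by
        rw [← pow_sub_one_mul (by omega : k ≠ 0) e]
        push_cast
        ring
    _ ≤ (2 * k) ^ Fintype.card ι * (((A + B).card ^ k : ℕ) * e ^ k) := by
        gcongr
    _ = (2 * k) ^ Fintype.card ι * ((A + B).card * e) ^ k := by
        push_cast
        ring
    _ ≤ (2 * k) ^ Fintype.card ι * volume (K + S) ^ k := by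
        gcongr

theorem volume_signedSumset_mul_volume_pow_le {K S : Set (ι → ℝ)}
    (hK : Bornology.IsBounded K) (hS : IsOpen S) {k : ℕ} (hk : 2 ≤ k) {ε : Fin k → ℤ}
    (hε : ∀ i, ε i = 1 ∨ ε i = -1) :
    volume (signedSumset ε K) * volume S ^ (k - 1)
      ≤ (2 * k) ^ Fintype.card ι * volume (K + S) ^ k := by
  simp only [hS.measure_eq_iSup_isCompact, ENNReal.iSup_pow_of_ne_zero (by omega : k - 1 ≠ 0),
    ENNReal.mul_iSup]
  refine iSup₂_le fun C hCS => iSup_le fun hC => ?_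
  obtain ⟨δ, hδ, hδS⟩ := hC.exists_cthickening_subset_open hS hCS
  refine volume_signedSumset_mul_volume_pow_le_of_cthickening_subset hK hC.isBounded
    (δ := δ / 3) (by positivity) ?_ hk hε
  rwa [mul_div_cancel₀ _ three_ne_zero]

end Grid

lemma ENNReal.rpow_one_div_mul_rpow_one_sub_one_div_le {X Y M : ℝ≥0∞} {k : ℕ} (hk : k ≠ 0)
    (h : X * Y ^ (k - 1) ≤ M ^ k) : X ^ (1 / k : ℝ) * Y ^ (1 - 1 / k : ℝ) ≤ M := by
  have hexp : (1 - 1 / k : ℝ) = ((k - 1 : ℕ) : ℝ) * (k : ℝ)⁻¹ := by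
    rw [Nat.cast_sub (Nat.one_le_iff_ne_zero.2 hk), Nat.cast_one]
    field_simp
  rw [hexp, ENNReal.rpow_natCast_mul, one_div, ← ENNReal.mul_rpow_of_nonneg _ _ (by positivity)]
  calc _ ≤ (M ^ k) ^ (k : ℝ)⁻¹ := ENNReal.rpow_le_rpow h (by positivity)
    _ = M := ENNReal.pow_rpow_inv_natCast hk M

lemma Nat.two_mul_le_two_pow : ∀ k : ℕ, 2 * k ≤ 2 ^ k
  | 0 => by simp
  | k + 1 => by
    have := k.lt_two_pow_self
    rw [pow_succ]
    omega

lemma EuclideanSpace.volume_image_equiv {d : ℕ} (X : Set (EuclideanSpace ℝ (Fin d))) :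
    volume (EuclideanSpace.equiv (Fin d) ℝ '' X) = volume X := by
  rw [← (EuclideanSpace.volume_preserving_symm_measurableEquiv_toLp (Fin d)).symm
    |>.measure_preimage_equiv X, ContinuousLinearEquiv.image_eq_preimage_symm]
  rfl

theorem stmt5 (d : ℕ) :
    ∃ C : ℝ, 0 < C ∧
      ∀ K S : Set (EuclideanSpace ℝ (Fin d)), IsCompact K → IsOpen S →
        ∀ k : ℕ, ∀ hk : 2 ≤ k, ∀ ε : Fin k → ℤ,
          ε ⟨0, by omega⟩ = 1 → (∀ i, ε i = 1 ∨ ε i = -1) →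
            (volume {g : EuclideanSpace ℝ (Fin d) |
                ∃ x : Fin k → EuclideanSpace ℝ (Fin d),
                  (∀ i, x i ∈ K) ∧ g = ∑ i, ε i • x i}) ^ ((1 : ℝ) / k)
              * (volume S) ^ (1 - 1 / (k : ℝ))
              ≤ ENNReal.ofReal C * volume (K + S) := by
  refine ⟨2 ^ d, by positivity, fun K S hK hS k hk ε _ hε => ?_⟩
  set e := EuclideanSpace.equiv (Fin d) ℝ
  have key := volume_signedSumset_mul_volume_pow_le (hK.image e.continuous).isBounded
    (e.isOpenMap S hS) hk hε
  rw [← image_signedSumset, ← image_add, EuclideanSpace.volume_image_equiv,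
    EuclideanSpace.volume_image_equiv, EuclideanSpace.volume_image_equiv, Fintype.card_fin] at key
  rw [ENNReal.ofReal_pow zero_le_two, ENNReal.ofReal_ofNat]
  refine ENNReal.rpow_one_div_mul_rpow_one_sub_one_div_le (by omega) (key.trans ?_)
  calc (2 * k : ℝ≥0∞) ^ d * volume (K + S) ^ k ≤ (2 ^ k) ^ d * volume (K + S) ^ k := by
        gcongr
        exact_mod_cast k.two_mul_le_two_pow
    _ = (2 ^ d * volume (K + S)) ^ k := by rw [mul_pow, ← pow_mul, ← pow_mul, mul_comm d k]
end

section
/- Let d ≥ 1 and let K ⊂ ℝ^d be a nonempty compact set satisfying K = ⋃_{j=0}^J φ_j(K), where φ_j(x) = r·x + b_j for a common ratio r ∈ (0,1) and points b_0, …, b_J ∈ ℝ^d whose convex hull has nonempty interior. If k is a positive integer with k + 1 ≥ d/r, then the k-fold sumset k·K = K + K + ⋯ + K (k summands) has nonempty interior in ℝ^d. -/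
/-!
Choose at most `d + 1` of the points `b j` whose convex hull `D` still has interior, and put
`c = r k / (1 - r)`, so that `r (k + c) = c` and `c ≥ d`. Writing a point of `(k + c) • D` in
barycentric coordinates and rounding its weights down to integers summing to `k` shows
`(k + c) • D ⊆ c • D + k·D₀ = r • ((k + c) • D) + k·D₀`, where `D₀` is the set of vertices of `D`.
Since also `r • (k·K) + k·D₀ ⊆ k·K`, iterating the two inclusions approximates every point of
`(k + c) • D` by points of the compact set `k·K` up to an error `O(rⁿ)`, so `(k + c) • D ⊆ k·K`.
-/

open Set Pointwise

/-- The `k`-fold iterated sumset `A + A + ⋯ + A` (`k` summands). -/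
def kSum {M : Type*} [AddCommMonoid M] (k : ℕ) (A : Set M) : Set M :=
  {x | ∃ f : Fin k → M, (∀ i, f i ∈ A) ∧ x = ∑ i, f i}

section kSum

variable {M : Type*} [AddCommMonoid M] {A : Set M}

lemma zero_mem_kSum_zero : (0 : M) ∈ kSum 0 A :=
  ⟨Fin.elim0, fun i => i.elim0, by simp⟩

lemma nsmul_mem_kSum {a : M} (ha : a ∈ A) (n : ℕ) : n • a ∈ kSum n A :=
  ⟨fun _ => a, fun _ => ha, by simp⟩

lemma add_mem_kSum {m n : ℕ} {x y : M} (hx : x ∈ kSum m A) (hy : y ∈ kSum n A) :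
    x + y ∈ kSum (m + n) A := by
  obtain ⟨f, hf, rfl⟩ := hx
  obtain ⟨g, hg, rfl⟩ := hy
  exact ⟨Fin.append f g, Fin.addCases (by simpa using hf) (by simpa using hg),
    by simp [Fin.sum_univ_add]⟩

lemma Finset.sum_mem_kSum {ι : Type*} (s : Finset ι) {n : ι → ℕ} {x : ι → M}
    (h : ∀ i ∈ s, x i ∈ kSum (n i) A) : ∑ i ∈ s, x i ∈ kSum (∑ i ∈ s, n i) A := by
  induction s using Finset.cons_induction with
  | empty => simpa using zero_mem_kSum_zero
  | cons i s his ih =>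
    rw [Finset.sum_cons, Finset.sum_cons]
    exact add_mem_kSum (h i (Finset.mem_cons_self i s))
      (ih fun j hj => h j (Finset.mem_cons_of_mem hj))

lemma smul_kSum_add_kSum_subset {R : Type*} [Monoid R] [DistribMulAction R M] {r : R}
    {B : Set M} (h : r • A + B ⊆ A) (k : ℕ) : r • kSum k A + kSum k B ⊆ kSum k A := by
  rintro _ ⟨_, ⟨_, ⟨f, hf, rfl⟩, rfl⟩, _, ⟨g, hg, rfl⟩, rfl⟩
  exact ⟨fun i => r • f i + g i, fun i => h (add_mem_add (smul_mem_smul_set (hf i)) (hg i)),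
    by simp [Finset.smul_sum, Finset.sum_add_distrib]⟩

lemma IsCompact.kSum [TopologicalSpace M] [ContinuousAdd M] (hA : IsCompact A) (k : ℕ) :
    IsCompact (_root_.kSum k A) := by
  have : _root_.kSum k A = (fun f : Fin k → M => ∑ i, f i) '' univ.pi fun _ => A := by
    ext x
    simp [_root_.kSum, eq_comm]
  rw [this]
  exact (isCompact_univ_pi fun _ => hA).image (continuous_finsetSum _ fun i _ => continuous_apply i)

end kSum

lemma Finset.exists_le_sum_eq_of_le_sum {ι : Type*} [DecidableEq ι] (s : Finset ι) {g : ι → ℕ}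
    {n : ℕ} (h : n ≤ ∑ i ∈ s, g i) : ∃ m ≤ g, ∑ i ∈ s, m i = n := by
  induction n with
  | zero => exact ⟨0, fun _ => Nat.zero_le _, by simp⟩
  | succ n ih =>
    obtain ⟨m, hmg, hm⟩ := ih (Nat.le_of_succ_le h)
    obtain ⟨i, his, hi⟩ : ∃ i ∈ s, m i < g i := by
      by_contra! hge
      have := Finset.sum_le_sum hge
      omega
    refine ⟨Function.update m i (m i + 1), fun j => ?_, ?_⟩
    · rcases eq_or_ne j i with rfl | hji
      · simpa using hi
      · simpa [Function.update_of_ne hji] using hmg j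
    · rw [Finset.sum_update_of_mem his, ← hm, ← Finset.add_sum_erase s m his,
        Finset.sdiff_singleton_eq_erase]
      ring

section Convex

variable {E : Type*} [AddCommGroup E] [Module ℝ E]

lemma Finset.sum_smul_mem_smul_convexHull (F : Finset E) {μ : E → ℝ} (hμ : ∀ y ∈ F, 0 ≤ μ y)
    {c : ℝ} (hc : 0 < c) (hμc : ∑ y ∈ F, μ y = c) :
    ∑ y ∈ F, μ y • y ∈ c • convexHull ℝ (F : Set E) := by
  refine ⟨_, F.centerMass_id_mem_convexHull hμ (hμc ▸ hc), ?_⟩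
  simp [Finset.centerMass, hμc, smul_inv_smul₀ hc.ne']

lemma smul_convexHull_subset_smul_convexHull_add_kSum (F : Finset E) (k : ℕ) {c : ℝ}
    (hc : 0 < c) (hF : (F.card : ℝ) ≤ c + 1) :
    ((k : ℝ) + c) • convexHull ℝ (F : Set E) ⊆ c • convexHull ℝ (F : Set E) + kSum k F := by
  classical
  rintro _ ⟨_, hz, rfl⟩
  obtain ⟨w, hw0, hw1, rfl⟩ := F.mem_convexHull'.1 hz
  set ρ : ℝ := k + c
  have hFne : F.Nonempty := Finset.nonempty_of_sum_ne_zero (by rw [hw1]; exact one_ne_zero)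
  -- Rounding the weights `ρ * w y` down loses less than `F.card ≤ c + 1` in total.
  have hk : k ≤ ∑ y ∈ F, ⌊ρ * w y⌋₊ := by
    have hfloor : ∑ y ∈ F, (ρ * w y - 1) < ∑ y ∈ F, (⌊ρ * w y⌋₊ : ℝ) :=
      Finset.sum_lt_sum_of_nonempty hFne fun y _ => Nat.sub_one_lt_floor _
    rw [Finset.sum_sub_distrib, ← Finset.mul_sum, hw1, mul_one, Finset.sum_const, nsmul_one,
      ← Nat.cast_sum] at hfloor
    have : (k : ℝ) < (∑ y ∈ F, ⌊ρ * w y⌋₊ : ℕ) + 1 := by linarith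
    exact Nat.lt_succ_iff.1 (by exact_mod_cast this)
  obtain ⟨m, hm, hmk⟩ := F.exists_le_sum_eq_of_le_sum hk
  have hμ : ∀ y ∈ F, 0 ≤ ρ * w y - m y := fun y hy => by
    have hmy : (m y : ℝ) ≤ ⌊ρ * w y⌋₊ := Nat.cast_le.2 (hm y)
    have hfl : (⌊ρ * w y⌋₊ : ℝ) ≤ ρ * w y := Nat.floor_le (mul_nonneg (by positivity) (hw0 y hy))
    linarith
  have hμc : ∑ y ∈ F, (ρ * w y - m y) = c := by
    rw [Finset.sum_sub_distrib, ← Finset.mul_sum, hw1, ← Nat.cast_sum, hmk]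
    ring
  refine ⟨_, F.sum_smul_mem_smul_convexHull hμ hc hμc, _,
    hmk ▸ F.sum_mem_kSum fun y hy => nsmul_mem_kSum hy (m y), ?_⟩
  simp only [sub_smul, Finset.sum_sub_distrib, Finset.smul_sum, smul_smul, Nat.cast_smul_eq_nsmul,
    sub_add_cancel]

end Convex

section Normed

variable {E : Type*} [NormedAddCommGroup E] [NormedSpace ℝ E]

lemma subset_of_subset_smul_add_of_smul_add_subset {r : ℝ} (hr0 : 0 ≤ r) (hr1 : r < 1)
    {Ω C S : Set E} (hΩ : Bornology.IsBounded Ω) (hC : IsClosed C) (hCne : C.Nonempty)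
    (hΩS : Ω ⊆ r • Ω + S) (hCS : r • C + S ⊆ C) : Ω ⊆ C := by
  obtain ⟨c₀, hc₀⟩ := hCne
  obtain ⟨R, hR⟩ := hΩ.subset_closedBall c₀
  have happrox : ∀ n : ℕ, ∀ x ∈ Ω, ∃ y ∈ C, dist x y ≤ r ^ n * R := by
    intro n
    induction n with
    | zero => exact fun x hx => ⟨c₀, hc₀, by simpa using hR hx⟩
    | succ n ih =>
      intro x hx
      obtain ⟨_, ⟨x', hx', rfl⟩, s, hs, rfl⟩ := hΩS hx
      obtain ⟨y, hy, hxy⟩ := ih x' hx'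
      refine ⟨r • y + s, hCS (add_mem_add (smul_mem_smul_set hy) hs), ?_⟩
      calc dist (r • x' + s) (r • y + s) = r * dist x' y := by
            rw [dist_add_right, dist_smul₀, Real.norm_of_nonneg hr0]
        _ ≤ r * (r ^ n * R) := by gcongr
        _ = r ^ (n + 1) * R := by ring
  intro x hx
  rw [← hC.closure_eq, Metric.mem_closure_iff]
  intro ε hε
  have hlim : Filter.Tendsto (fun n : ℕ => r ^ n * R) Filter.atTop (nhds 0) := by
    simpa using (tendsto_pow_atTop_nhds_zero_of_lt_one hr0 hr1).mul_const R
  obtain ⟨n, hn⟩ := (hlim.eventually (gt_mem_nhds hε)).exists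
  obtain ⟨y, hy, hxy⟩ := happrox n x hx
  exact ⟨y, hy, hxy.trans_lt hn⟩

lemma exists_finset_subset_card_le_interior_convexHull_nonempty [FiniteDimensional ℝ E]
    {s : Set E} (hs : (interior (convexHull ℝ s)).Nonempty) :
    ∃ F : Finset E, ↑F ⊆ s ∧ F.card ≤ Module.finrank ℝ E + 1 ∧
      (interior (convexHull ℝ (F : Set E))).Nonempty := by
  rw [interior_convexHull_nonempty_iff_affineSpan_eq_top] at hs
  obtain ⟨t, hts, hspan, hind⟩ := exists_affineIndependent ℝ E s
  lift t to Finset E using finite_set_of_fin_dim_affineIndependent ℝ hind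
  refine ⟨t, hts, ?_, ?_⟩
  · calc t.card = Fintype.card t := (Fintype.card_coe t).symm
      _ ≤ Module.finrank ℝ (vectorSpan ℝ (Set.range ((↑) : t → E))) + 1 :=
        hind.card_le_finrank_succ
      _ ≤ Module.finrank ℝ E + 1 := by gcongr; exact Submodule.finrank_le _
  · rw [interior_convexHull_nonempty_iff_affineSpan_eq_top, hspan, hs]

end Normed

theorem stmt6 (d J k : ℕ) (hd : 1 ≤ d) (r : ℝ) (hr0 : 0 < r) (hr1 : r < 1)
    (b : Fin (J + 1) → EuclideanSpace ℝ (Fin d))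
    (hconv : (interior (convexHull ℝ (Set.range b))).Nonempty)
    (K : Set (EuclideanSpace ℝ (Fin d))) (hKne : K.Nonempty) (hKc : IsCompact K)
    (hself : K = ⋃ j : Fin (J + 1), (fun x => r • x + b j) '' K)
    (hk : 1 ≤ k) (hkr : (d : ℝ) / r ≤ (k : ℝ) + 1) :
    (interior (kSum k K)).Nonempty := by
  obtain ⟨F, hFb, hFcard, z, hz⟩ := exists_finset_subset_card_le_interior_convexHull_nonempty hconv
  rw [finrank_euclideanSpace_fin] at hFcard
  set c := r * k / (1 - r)
  have hc : 0 < c := div_pos (mul_pos hr0 (by exact_mod_cast hk)) (by linarith)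
  have hrc : r * (k + c) = c := by
    simp only [c]
    field_simp [(by linarith : 1 - r ≠ 0)]
    ring
  have hFc : (F.card : ℝ) ≤ c + 1 := by
    have hdk : (d : ℝ) ≤ r * (k + 1) := by rwa [div_le_iff₀ hr0, mul_comm] at hkr
    have hd' : (1 : ℝ) ≤ d := by exact_mod_cast hd
    have hdc : (d : ℝ) ≤ c := by
      rw [le_div_iff₀ (by linarith)]
      nlinarith
    have : (F.card : ℝ) ≤ d + 1 := by exact_mod_cast hFcard
    linarith
  have hKF : r • K + (F : Set _) ⊆ K := by
    rintro _ ⟨_, ⟨x, hx, rfl⟩, _, hy, rfl⟩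
    obtain ⟨j, rfl⟩ := hFb hy
    rw [hself]
    exact mem_iUnion.2 ⟨j, x, hx, rfl⟩
  have hρ : (k : ℝ) + c ≠ 0 := by positivity
  have hsub : ((k : ℝ) + c) • convexHull ℝ (F : Set _) ⊆ kSum k K := by
    refine subset_of_subset_smul_add_of_smul_add_subset hr0.le hr1
      ((F.finite_toSet.isCompact_convexHull ℝ).smul ((k : ℝ) + c)).isBounded (hKc.kSum k).isClosed
      (hKne.elim fun x hx => ⟨_, nsmul_mem_kSum hx k⟩) ?_ (smul_kSum_add_kSum_subset hKF k)
    rw [smul_smul, hrc]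
    exact smul_convexHull_subset_smul_convexHull_add_kSum F k hc hFc
  refine ⟨((k : ℝ) + c) • z, interior_mono hsub ?_⟩
  rw [interior_smul₀ hρ]
  exact smul_mem_smul_set hz
end

section
/- Fix a ∈ (0, 1/2) and let C_a = {(1−a)·Σ_{j=0}^∞ ε_j a^j : ε_j ∈ {0,1} for all j} ⊂ ℝ. If k is a positive integer with k ≥ (1−a)/a, then the k-fold sumset C_a + C_a + ⋯ + C_a (k summands) contains a nontrivial interval, i.e., has nonempty interior in ℝ. -/
open Set Pointwise

/-- The homogeneous Cantor set `C_a = {(1-a) ∑ εⱼ aʲ : εⱼ ∈ {0,1}}`. -/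
def homCantor (a : ℝ) : Set ℝ :=
  {x | ∃ ε : ℕ → ℝ, (∀ j, ε j = 0 ∨ ε j = 1) ∧ x = (1 - a) * ∑' j : ℕ, ε j * a ^ j}

/-!
With `1 - a ≤ k a`, the greedy algorithm expands every `y ∈ [0, k/(1-a)]` as `∑ δⱼ aʲ` with digits
`δⱼ ∈ {0, …, k}`: the remainder `r` stays in `[0, k/(1-a)]` because subtracting the digit
`min k ⌊r⌋` leaves at most `max 1 (r - k) ≤ k a/(1-a)`, before the rescaling by `1/a`. Writing `δⱼ = ∑_{i<k} [i < δⱼ]`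
splits such an expansion into `k` expansions with digits in `{0, 1}`, so `[0, k] ⊆ C_a + ⋯ + C_a`.
-/

lemma mem_kSum_homCantor_of_digits_le {a : ℝ} (ha : |a| < 1) {k : ℕ} {δ : ℕ → ℕ}
    (hδ : ∀ j, δ j ≤ k) : (1 - a) * ∑' j, (δ j : ℝ) * a ^ j ∈ kSum k (homCantor a) := by
  set ε : Fin k → ℕ → ℝ := fun i j => if (i : ℕ) < δ j then 1 else 0
  have hε_sum : ∀ j, ∑ i, ε i j = δ j := by
    intro j
    simp [ε, Finset.sum_boole, Fin.card_filter_val_lt, hδ j]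
  have hε_summable : ∀ i, Summable fun j => ε i j * a ^ j := fun i =>
    (summable_geometric_of_lt_one (abs_nonneg a) ha).of_norm_bounded fun j => by
      by_cases h : (i : ℕ) < δ j <;> simp [ε, h]
  refine ⟨fun i => (1 - a) * ∑' j, ε i j * a ^ j, fun i => ⟨ε i, fun j => ?_, rfl⟩, ?_⟩
  · by_cases h : (i : ℕ) < δ j <;> simp [ε, h]
  · rw [← Finset.mul_sum, ← Summable.tsum_finsetSum fun i _ => hε_summable i]
    simp_rw [← Finset.sum_mul, hε_sum]

section Greedy

variable (a : ℝ) (k : ℕ)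

noncomputable def greedyStep (r : ℝ) : ℝ :=
  (r - (min k ⌊r⌋₊ : ℕ)) / a

noncomputable def greedyDigit (x : ℝ) (n : ℕ) : ℕ :=
  min k ⌊(greedyStep a k)^[n] x⌋₊

lemma greedyDigit_le (x : ℝ) (n : ℕ) : greedyDigit a k x n ≤ k :=
  min_le_left _ _

variable {a k}

lemma greedyStep_mapsTo (ha0 : 0 < a) (ha1 : a < 1) (hka : 1 - a ≤ k * a) :
    MapsTo (greedyStep a k) (Icc 0 (k / (1 - a))) (Icc 0 (k / (1 - a))) := by
  rintro r ⟨hr0, hrk⟩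
  have h1a : 0 < 1 - a := by linarith
  have hd : ((min k ⌊r⌋₊ : ℕ) : ℝ) ≤ r :=
    (Nat.cast_le.mpr (min_le_right _ _)).trans (Nat.floor_le hr0)
  have hup : r - (min k ⌊r⌋₊ : ℕ) ≤ k * a / (1 - a) := by
    rcases le_total k ⌊r⌋₊ with h | h
    · have : (k : ℝ) / (1 - a) - k = k * a / (1 - a) := by field_simp; ring
      rw [min_eq_left h]
      linarith
    · have : 1 ≤ k * a / (1 - a) := by rwa [le_div_iff₀ h1a, one_mul]
      rw [min_eq_right h]
      linarith [Nat.lt_floor_add_one r]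
  refine ⟨div_nonneg (by linarith) ha0.le, ?_⟩
  rw [greedyStep, div_le_iff₀ ha0]
  calc r - (min k ⌊r⌋₊ : ℕ) ≤ k * a / (1 - a) := hup
    _ = k / (1 - a) * a := by ring

lemma sum_range_greedyDigit (ha0 : a ≠ 0) (x : ℝ) (n : ℕ) :
    ∑ j ∈ Finset.range n, (greedyDigit a k x j : ℝ) * a ^ j
      = x - a ^ n * (greedyStep a k)^[n] x := by
  induction n with
  | zero => simp
  | succ n ih =>
    rw [Finset.sum_range_succ, ih, Function.iterate_succ_apply', greedyStep, greedyDigit]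
    field_simp
    ring

lemma hasSum_greedyDigit (ha0 : 0 < a) (ha1 : a < 1) (hka : 1 - a ≤ k * a) {x : ℝ}
    (hx : x ∈ Icc 0 (k / (1 - a))) :
    HasSum (fun j => (greedyDigit a k x j : ℝ) * a ^ j) x := by
  rw [hasSum_iff_tendsto_nat_of_nonneg (fun j => by positivity)]
  simp_rw [sum_range_greedyDigit ha0.ne']
  have hrem n := (greedyStep_mapsTo ha0 ha1 hka).iterate n hx
  have hbound : Filter.Tendsto (fun n => a ^ n * (k / (1 - a))) Filter.atTop (nhds 0) := by
    simpa using (tendsto_pow_atTop_nhds_zero_of_lt_one ha0.le ha1).mul_const (k / (1 - a) : ℝ)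
  have htail : Filter.Tendsto (fun n => a ^ n * (greedyStep a k)^[n] x) Filter.atTop (nhds 0) :=
    squeeze_zero (fun n => mul_nonneg (by positivity) (hrem n).1)
      (fun n => mul_le_mul_of_nonneg_left (hrem n).2 (by positivity)) hbound
  simpa using htail.const_sub x

end Greedy

lemma Icc_subset_kSum_homCantor {a : ℝ} (ha0 : 0 < a) (ha1 : a < 1) {k : ℕ}
    (hka : 1 - a ≤ k * a) : Icc 0 (k : ℝ) ⊆ kSum k (homCantor a) := by
  rintro x ⟨hx0, hxk⟩
  have h1a : 0 < 1 - a := by linarith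
  have hy : x / (1 - a) ∈ Icc 0 (k / (1 - a)) :=
    ⟨div_nonneg hx0 h1a.le, div_le_div_of_nonneg_right hxk h1a.le⟩
  have hmem := mem_kSum_homCantor_of_digits_le (abs_lt.mpr ⟨by linarith, ha1⟩)
    (greedyDigit_le a k (x / (1 - a)))
  rwa [(hasSum_greedyDigit ha0 ha1 hka hy).tsum_eq, mul_div_cancel₀ _ h1a.ne'] at hmem

theorem stmt8_general (a : ℝ) (ha0 : 0 < a) (ha1 : a < 1 / 2) (k : ℕ)
    (hka : (1 - a) / a ≤ (k : ℝ)) :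
    (interior (kSum k (homCantor a))).Nonempty := by
  have ha1' : a < 1 := by linarith
  have hk : (0 : ℝ) < k := (div_pos (by linarith) ha0).trans_le hka
  have hsub := Icc_subset_kSum_homCantor ha0 ha1' ((div_le_iff₀ ha0).mp hka)
  refine ⟨k / 2, interior_mono hsub ?_⟩
  rw [interior_Icc]
  constructor <;> linarith

theorem stmt8 (a : ℝ) (ha0 : 0 < a) (ha1 : a < 1 / 2) (k : ℕ) (hk : 1 ≤ k)
    (hka : (1 - a) / a ≤ (k : ℝ)) :
    (interior (kSum k (homCantor a))).Nonempty :=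
  stmt8_general a ha0 ha1 k hka
end

section
/- Fix an integer J > 2 and a real number r with 2/(3J) ≤ r < 1/(J+1). Let K ⊂ ℝ be a nonempty compact set satisfying K = ⋃_{j=0}^J (r·K + j). Then the subset {(x_0 − x_1, x_0 − x_2) : x_0, x_1, x_2 ∈ K} of ℝ² has nonempty interior. -/
/-!
Write `S` for the set of pairs `(x₀ - x₁, x₀ - x₂)` and `H` for the hexagon `|a|, |b|, |a - b| ≤ J`.
Self-similarity of `K` gives `r • S + (j₀ - j₁, j₀ - j₂) ⊆ S` for all digits `jᵢ ≤ J`, and the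
integer points of `H` are exactly these translations. Every point of the plane lies within hexagonal
distance `2/3` of `ℤ²` and `2/3 ≤ r J`, so `H` is covered by the sets `r • H + t` over these
translations `t`. Iterating the contractions `p ↦ r • p + t` from a point of `S` therefore
approximates every point of `H`; as `S` is closed, `H ⊆ S`, and `H` is a neighbourhood of `0`.
-/

open Set Filter Topology Metric

theorem IsClosed.subset_of_subset_biUnion_image {X ι : Type*} [MetricSpace X] {f : ι → X → X}
    {I : Set ι} {K : NNReal} {S H : Set X} (hK : K < 1) (hf : ∀ i ∈ I, LipschitzWith K (f i))
    (hS : IsClosed S) (hSne : S.Nonempty) (hSf : ∀ i ∈ I, MapsTo (f i) S S)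
    (hH : Bornology.IsBounded H) (hHf : H ⊆ ⋃ i ∈ I, f i '' H) : H ⊆ S := by
  obtain ⟨s₀, hs₀⟩ := hSne
  obtain ⟨C, hC⟩ := hH.subset_closedBall s₀
  have approx : ∀ n : ℕ, ∀ p ∈ H, ∃ q ∈ S, dist p q ≤ K ^ n * C := by
    intro n
    induction n with
    | zero => exact fun p hp => ⟨s₀, hs₀, by simpa using hC hp⟩
    | succ n ih =>
      intro p hp
      obtain ⟨i, hi, h, hh, rfl⟩ := mem_iUnion₂.1 (hHf hp)
      obtain ⟨q, hq, hhq⟩ := ih h hh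
      refine ⟨f i q, hSf i hi hq, ?_⟩
      calc dist (f i h) (f i q) ≤ K * dist h q := (hf i hi).dist_le_mul h q
        _ ≤ K * (K ^ n * C) := by gcongr
        _ = K ^ (n + 1) * C := by ring
  intro p hp
  rw [← hS.closure_eq, Metric.mem_closure_iff]
  intro ε hε
  have hlim := (tendsto_pow_atTop_nhds_zero_of_lt_one K.2 hK).mul_const C
  rw [zero_mul] at hlim
  obtain ⟨n, hn⟩ := (hlim.eventually (gt_mem_nhds hε)).exists
  obtain ⟨q, hq, hpq⟩ := approx n p hp
  exact ⟨q, hq, hpq.trans_lt hn⟩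

theorem lipschitzWith_smul_add {E : Type*} [NormedAddCommGroup E] [NormedSpace ℝ E] (r : ℝ)
    (t : E) : LipschitzWith ‖r‖₊ (fun x => r • x + t) :=
  LipschitzWith.of_dist_le_mul fun x y => by rw [dist_add_right, dist_smul₀, coe_nnnorm]

def pairDiffs {α : Type*} [AddGroup α] (K : Set α) : Set (α × α) :=
  {p | ∃ x₀ ∈ K, ∃ x₁ ∈ K, ∃ x₂ ∈ K, p = (x₀ - x₁, x₀ - x₂)}

section pairDiffs

variable {α : Type*} [AddCommGroup α] {K : Set α}

theorem pairDiffs_eq_image (K : Set α) :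
    pairDiffs K = (fun x : α × α × α => (x.1 - x.2.1, x.1 - x.2.2)) '' (K ×ˢ K ×ˢ K) := by
  ext p
  simp only [pairDiffs, mem_ofPred_eq, mem_image, mem_prod, Prod.exists]
  grind

theorem IsCompact.pairDiffs [TopologicalSpace α] [ContinuousSub α] (hK : IsCompact K) :
    IsCompact (pairDiffs K) := by
  rw [pairDiffs_eq_image]
  exact (hK.prod (hK.prod hK)).image (by fun_prop)

theorem Set.Nonempty.pairDiffs (hK : K.Nonempty) : (pairDiffs K).Nonempty :=
  let ⟨x, hx⟩ := hK
  ⟨_, x, hx, x, hx, x, hx, rfl⟩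

theorem mapsTo_smul_add_pairDiffs {R : Type*} [Monoid R] [DistribMulAction R α] {r : R}
    {D : Set α} (hD : ∀ d ∈ D, MapsTo (fun x => r • x + d) K K) {t : α × α}
    (ht : t ∈ pairDiffs D) : MapsTo (fun p => r • p + t) (pairDiffs K) (pairDiffs K) := by
  obtain ⟨d₀, hd₀, d₁, hd₁, d₂, hd₂, rfl⟩ := ht
  rintro _ ⟨x₀, hx₀, x₁, hx₁, x₂, hx₂, rfl⟩
  refine ⟨_, hD d₀ hd₀ hx₀, _, hD d₁ hd₁ hx₁, _, hD d₂ hd₂ hx₂, ?_⟩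
  simp only [Prod.smul_mk, Prod.mk_add_mk, smul_sub, Prod.mk.injEq]
  constructor <;> abel

end pairDiffs

def hexagon (m : ℝ) : Set (ℝ × ℝ) := {p | |p.1| ≤ m ∧ |p.2| ≤ m ∧ |p.1 - p.2| ≤ m}

theorem hexagon_mono {a b : ℝ} (hab : a ≤ b) : hexagon a ⊆ hexagon b :=
  fun _ ⟨h₁, h₂, h₃⟩ => ⟨h₁.trans hab, h₂.trans hab, h₃.trans hab⟩

theorem sub_mem_hexagon {p q : ℝ × ℝ} {a b : ℝ} (hp : p ∈ hexagon a) (hq : q ∈ hexagon b) :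
    p - q ∈ hexagon (a + b) := by
  obtain ⟨hp₁, hp₂, hp₃⟩ := hp
  obtain ⟨hq₁, hq₂, hq₃⟩ := hq
  refine ⟨(abs_sub _ _).trans (add_le_add hp₁ hq₁), (abs_sub _ _).trans (add_le_add hp₂ hq₂), ?_⟩
  calc |(p - q).1 - (p - q).2| = |(p.1 - p.2) - (q.1 - q.2)| := by
        rw [Prod.fst_sub, Prod.snd_sub]; ring_nf
    _ ≤ a + b := (abs_sub _ _).trans (add_le_add hp₃ hq₃)

theorem smul_mem_hexagon {p : ℝ × ℝ} {a c : ℝ} (hc : 0 ≤ c) (hp : p ∈ hexagon a) :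
    c • p ∈ hexagon (c * a) := by
  obtain ⟨h₁, h₂, h₃⟩ := hp
  refine ⟨?_, ?_, ?_⟩ <;>
    simp only [Prod.smul_fst, Prod.smul_snd, smul_eq_mul, ← mul_sub, abs_mul, abs_of_nonneg hc] <;>
    gcongr

theorem hexagon_mem_nhds_zero {m : ℝ} (hm : 0 < m) : hexagon m ∈ 𝓝 0 := by
  refine mem_of_superset (ball_mem_nhds 0 (half_pos hm)) fun p hp => ?_
  rw [mem_ball_zero_iff, Prod.norm_def, max_lt_iff, Real.norm_eq_abs, Real.norm_eq_abs] at hp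
  exact ⟨by linarith, by linarith, by linarith [abs_sub p.1 p.2]⟩

theorem isBounded_hexagon (m : ℝ) : Bornology.IsBounded (hexagon m) :=
  (isBounded_closedBall (x := 0) (r := m)).subset fun p ⟨h₁, h₂, _⟩ => by
    rw [mem_closedBall_zero_iff, Prod.norm_def, max_le_iff, Real.norm_eq_abs, Real.norm_eq_abs]
    exact ⟨h₁, h₂⟩

theorem exists_int_sub_mem_hexagon_of_mem_Ico {a b : ℝ} (ha : a ∈ Ico 0 1) (hb : b ∈ Ico 0 1) :
    ∃ u v : ℤ, (a - u, b - v) ∈ hexagon (2 / 3) := by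
  obtain ⟨ha₀, ha₁⟩ := ha
  obtain ⟨hb₀, hb₁⟩ := hb
  have of_bounds : ∀ u v : ℤ, |a - u| ≤ 2 / 3 → |b - v| ≤ 2 / 3 → |a - u - (b - v)| ≤ 2 / 3 →
      ∃ u v : ℤ, (a - u, b - v) ∈ hexagon (2 / 3) := fun u v h₁ h₂ h₃ => ⟨u, v, h₁, h₂, h₃⟩
  simp only [abs_le, and_imp] at of_bounds
  rcases le_or_gt a (2 / 3) with ha' | ha' <;> rcases le_or_gt b (2 / 3) with hb' | hb'
  · refine of_bounds 0 0 ?_ ?_ ?_ ?_ ?_ ?_ <;> push_cast <;> linarith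
  · rcases le_or_gt (1 / 3) a with ha'' | ha''
    · refine of_bounds 1 1 ?_ ?_ ?_ ?_ ?_ ?_ <;> push_cast <;> linarith
    · refine of_bounds 0 1 ?_ ?_ ?_ ?_ ?_ ?_ <;> push_cast <;> linarith
  · rcases le_or_gt (1 / 3) b with hb'' | hb''
    · refine of_bounds 1 1 ?_ ?_ ?_ ?_ ?_ ?_ <;> push_cast <;> linarith
    · refine of_bounds 1 0 ?_ ?_ ?_ ?_ ?_ ?_ <;> push_cast <;> linarith
  · refine of_bounds 1 1 ?_ ?_ ?_ ?_ ?_ ?_ <;> push_cast <;> linarith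

theorem exists_int_sub_mem_hexagon (p : ℝ × ℝ) :
    ∃ u v : ℤ, p - ((u : ℝ), (v : ℝ)) ∈ hexagon (2 / 3) := by
  obtain ⟨u, v, h⟩ := exists_int_sub_mem_hexagon_of_mem_Ico
    ⟨Int.fract_nonneg p.1, Int.fract_lt_one p.1⟩ ⟨Int.fract_nonneg p.2, Int.fract_lt_one p.2⟩
  refine ⟨⌊p.1⌋ + u, ⌊p.2⌋ + v, ?_⟩
  convert h using 2 <;> simp only [Int.fract, Prod.fst_sub, Prod.snd_sub, Int.cast_add] <;> ring

theorem Int.exists_nat_sub_eq_of_abs_le {J : ℕ} {u v : ℤ} (hu : |u| ≤ J) (hv : |v| ≤ J)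
    (huv : |u - v| ≤ J) :
    ∃ j₀ ≤ J, ∃ j₁ ≤ J, ∃ j₂ ≤ J, u = (j₀ : ℤ) - j₁ ∧ v = (j₀ : ℤ) - j₂ := by
  rw [abs_le] at hu hv huv
  set j₀ := max u (max v 0)
  exact ⟨j₀.toNat, by omega, (j₀ - u).toNat, by omega, (j₀ - v).toNat, by omega, by omega, by omega⟩

theorem intCast_mem_pairDiffs {J : ℕ} {m : ℝ} (hm : m < J + 1) {u v : ℤ}
    (h : ((u : ℝ), (v : ℝ)) ∈ hexagon m) :
    ((u : ℝ), (v : ℝ)) ∈ pairDiffs (Nat.cast '' Iic J : Set ℝ) := by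
  have bound : ∀ w : ℤ, |(w : ℝ)| ≤ m → |w| ≤ J := fun w hw =>
    Int.lt_add_one_iff.1 (by exact_mod_cast (Int.cast_abs (R := ℝ) ▸ hw).trans_lt hm)
  obtain ⟨hu, hv, huv⟩ := h
  obtain ⟨j₀, hj₀, j₁, hj₁, j₂, hj₂, rfl, rfl⟩ := Int.exists_nat_sub_eq_of_abs_le (bound u hu)
    (bound v hv) (bound (u - v) (by push_cast; exact huv))
  exact ⟨j₀, mem_image_of_mem _ hj₀, j₁, mem_image_of_mem _ hj₁, j₂, mem_image_of_mem _ hj₂,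
    by push_cast; rfl⟩

theorem hexagon_subset_biUnion_smul_add {J : ℕ} {r : ℝ} (hr : 0 < r) (hrJ : 2 / 3 ≤ r * J) :
    hexagon J ⊆ ⋃ t ∈ pairDiffs (Nat.cast '' Iic J : Set ℝ), (fun p => r • p + t) '' hexagon J := by
  intro p hp
  obtain ⟨u, v, huv⟩ := exists_int_sub_mem_hexagon p
  have hz : ((u : ℝ), (v : ℝ)) ∈ hexagon (J + 2 / 3) := by
    simpa using sub_mem_hexagon hp huv
  have hscaled : r⁻¹ • (p - ((u : ℝ), (v : ℝ))) ∈ hexagon J :=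
    hexagon_mono (by rw [inv_mul_le_iff₀ hr]; exact hrJ) (smul_mem_hexagon (inv_nonneg.2 hr.le) huv)
  refine mem_iUnion₂.2 ⟨_, intCast_mem_pairDiffs (by linarith) hz, _, hscaled, ?_⟩
  simp only [smul_smul, mul_inv_cancel₀ hr.ne', one_smul, sub_add_cancel]

theorem stmt10 (J : ℕ) (hJ : 2 < J) (r : ℝ)
    (hr1 : 2 / (3 * (J : ℝ)) ≤ r) (hr2 : r < 1 / ((J : ℝ) + 1))
    (K : Set ℝ) (hKne : K.Nonempty) (hKc : IsCompact K)
    (hself : K = ⋃ j ∈ Finset.range (J + 1), (fun x => r * x + (j : ℝ)) '' K) :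
    (interior {p : ℝ × ℝ | ∃ x₀ ∈ K, ∃ x₁ ∈ K, ∃ x₂ ∈ K,
        p = (x₀ - x₁, x₀ - x₂)}).Nonempty := by
  have hJ0 : (0 : ℝ) < J := by exact_mod_cast (by omega : 0 < J)
  have hr0 : 0 < r := (by positivity : (0 : ℝ) < 2 / (3 * J)).trans_le hr1
  have hr_lt_one : ‖r‖₊ < 1 := by
    rw [← NNReal.coe_lt_coe, coe_nnnorm, Real.norm_of_nonneg hr0.le]
    exact hr2.trans_le (div_le_one_of_le₀ (by linarith) (by linarith))
  have hrJ : 2 / 3 ≤ r * J := by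
    rw [div_le_iff₀ (by positivity)] at hr1
    linarith
  have hdigits : ∀ d ∈ (Nat.cast '' Iic J : Set ℝ), MapsTo (fun x => r • x + d) K K := by
    rintro _ ⟨j, hj, rfl⟩ x hx
    rw [hself]
    exact mem_biUnion (Finset.mem_range.2 (Nat.lt_succ_of_le hj)) ⟨x, hx, rfl⟩
  have hHS : hexagon J ⊆ pairDiffs K :=
    hKc.pairDiffs.isClosed.subset_of_subset_biUnion_image hr_lt_one
      (fun t _ => lipschitzWith_smul_add r t) hKne.pairDiffs
      (fun _ ht => mapsTo_smul_add_pairDiffs hdigits ht) (isBounded_hexagon J)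
      (hexagon_subset_biUnion_smul_add hr0 hrJ)
  exact ⟨0, mem_interior_iff_mem_nhds.2 (mem_of_superset (hexagon_mem_nhds_zero hJ0) hHS)⟩
end

section
/- Fix an integer n ≥ 3, a nonempty subset A ⊂ {0, 1, …, n−1}, and a positive integer k, and let C_{n,A} = {Σ_{j=1}^∞ a_j/n^j : a_j ∈ A for all j} ⊂ ℝ. Suppose that {(a_0 − a_1, a_0 − a_2, …, a_0 − a_k) mod n : a_0, …, a_k ∈ A} = (ℤ/nℤ)^k. Then the set {(x_0 − x_1, x_0 − x_2, …, x_0 − x_k) : x_0, …, x_k ∈ C_{n,A}} ⊂ ℝ^k has positive k-dimensional Lebesgue measure. -/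
/-!
Let `D = {(x₀ - xᵢ)ᵢ : x₀, xᵢ ∈ C}` be the set of difference vectors. It is compact, so `D + ℤ^k`
is closed. Every integer vector is `a₀ - a + n q` with digits `a₀, aᵢ ∈ A`, and since
`(d + C) / n ⊆ C` for digits `d`, the set `D + ℤ^k` is invariant under division by `n`. A closed
set invariant under integer translations and under `x ↦ x / n` contains the grids
`n^{-j} (t + ℤ^k)`, so it is dense and hence all of `ℝ^k`. Countably many translates of `D` then
cover `ℝ^k`, so `D` has positive measure.
-/

open MeasureTheory Set

/-- The Cantor-like set `C_{n,A} = {∑_{j≥1} aⱼ n^{-j} : aⱼ ∈ A}`. -/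
def digitCantor (n : ℕ) (A : Finset ℕ) : Set ℝ :=
  {x | ∃ a : ℕ → ℕ, (∀ j, a j ∈ A) ∧ x = ∑' j : ℕ, (a j : ℝ) / (n : ℝ) ^ (j + 1)}

open Pointwise

section Lattice

variable {ι : Type*}

def intLattice (ι : Type*) : Set (ι → ℝ) := range (Pi.map fun _ => ((↑) : ℤ → ℝ))

lemma add_mem_intLattice {z w : ι → ℝ} (hz : z ∈ intLattice ι) (hw : w ∈ intLattice ι) :
    z + w ∈ intLattice ι := by
  obtain ⟨m, rfl⟩ := hz
  obtain ⟨m', rfl⟩ := hw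
  exact ⟨m + m', by ext; simp⟩

lemma isClosed_intLattice : IsClosed (intLattice ι) := by
  rw [intLattice, range_piMap]
  exact isClosed_set_pi fun _ _ => Int.isClosedEmbedding_coe_real.isClosed_range

lemma volume_pos_of_add_intLattice_eq_univ [Fintype ι] {S : Set (ι → ℝ)}
    (h : S + intLattice ι = univ) : 0 < volume S := by
  have hcover : univ ⊆ ⋃ m : ι → ℤ, (· - Pi.map (fun _ => ((↑) : ℤ → ℝ)) m) ⁻¹' S := by
    intro x _
    obtain ⟨s, hs, _, ⟨m, rfl⟩, rfl⟩ : x ∈ S + intLattice ι := h ▸ mem_univ x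
    exact mem_iUnion.mpr ⟨m, by simpa using hs⟩
  refine pos_iff_ne_zero.mpr fun hS => NeZero.ne (volume : Measure (ι → ℝ)) ?_
  refine Measure.measure_univ_eq_zero.mp <|
    measure_mono_null hcover (measure_iUnion_null fun m => ?_)
  simpa only [sub_eq_add_neg, measure_preimage_add_right]

lemma eq_univ_of_isClosed_of_smul_mem [Fintype ι] {T : Set (ι → ℝ)} {c : ℝ}
    (hc0 : 0 < c) (hc1 : c < 1)
    (hT : IsClosed T) (hne : T.Nonempty) (hadd : ∀ x ∈ T, ∀ z ∈ intLattice ι, x + z ∈ T)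
    (hsmul : ∀ x ∈ T, c • x ∈ T) : T = univ := by
  obtain ⟨t, ht⟩ := hne
  have hgrid : ∀ (j : ℕ) (m : ι → ℤ), c ^ j • (t + Pi.map (fun _ => ((↑) : ℤ → ℝ)) m) ∈ T := by
    intro j m
    induction j with
    | zero => simpa using hadd t ht _ ⟨m, rfl⟩
    | succ j ih => simpa [pow_succ', mul_smul] using hsmul _ ih
  refine eq_univ_of_forall fun y => hT.closure_eq ▸ Metric.mem_closure_iff.mpr fun ε hε => ?_
  obtain ⟨j, hj⟩ := exists_pow_lt_of_lt_one hε hc1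
  have hcj : 0 < c ^ j := pow_pos hc0 j
  refine ⟨_, hgrid j fun i => ⌊y i / c ^ j - t i⌋,
    ((dist_pi_le_iff hcj.le).mpr fun i => ?_).trans_lt hj⟩
  have hfract : y i - c ^ j * (t i + ⌊y i / c ^ j - t i⌋) =
      c ^ j * Int.fract (y i / c ^ j - t i) := by
    rw [← Int.self_sub_floor]
    field_simp
    ring
  simp only [Real.dist_eq, Pi.smul_apply, Pi.add_apply, Pi.map_apply, smul_eq_mul]
  rw [hfract, abs_of_nonneg (mul_nonneg hcj.le (Int.fract_nonneg _))]
  exact mul_le_of_le_one_right hcj.le (Int.fract_lt_one _).le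

end Lattice

section DigitCantor

variable {n : ℕ} {A : Finset ℕ}

lemma norm_natCast_div_pow_le {d : ℕ} (hd : d < n) (j : ℕ) :
    ‖(d : ℝ) / (n : ℝ) ^ (j + 1)‖ ≤ (1 / (n : ℝ)) ^ j := by
  have hn : (0 : ℝ) < n := by exact_mod_cast hd.pos
  rw [Real.norm_of_nonneg (by positivity), div_pow, one_pow, pow_succ,
    div_le_div_iff₀ (by positivity) (by positivity), one_mul, mul_comm]
  gcongr

lemma summable_geometric_natCast_inv (hn : 1 < n) : Summable fun j : ℕ => (1 / (n : ℝ)) ^ j :=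
  summable_geometric_of_lt_one (by positivity)
    ((div_lt_one (by positivity)).mpr (by exact_mod_cast hn))

lemma summable_digit_div_pow (hn : 1 < n) {a : ℕ → ℕ} (ha : ∀ j, a j < n) :
    Summable fun j => (a j : ℝ) / (n : ℝ) ^ (j + 1) :=
  (summable_geometric_natCast_inv hn).of_norm_bounded fun j => norm_natCast_div_pow_le (ha j) j

noncomputable def digitExpansion (n : ℕ) (A : Finset ℕ) (a : ℕ → A) : ℝ :=
  ∑' j : ℕ, ((a j : ℕ) : ℝ) / (n : ℝ) ^ (j + 1)

lemma digitCantor_eq_range : digitCantor n A = range (digitExpansion n A) := by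
  ext x
  constructor
  · rintro ⟨a, ha, rfl⟩
    exact ⟨fun j => ⟨a j, ha j⟩, rfl⟩
  · rintro ⟨a, rfl⟩
    exact ⟨fun j => a j, fun j => (a j).2, rfl⟩

lemma continuous_digitExpansion (hn : 1 < n) (hAn : A ⊆ Finset.range n) :
    Continuous (digitExpansion n A) :=
  continuous_tsum (fun j => (continuous_of_discreteTopology
      (f := fun d : A => ((d : ℕ) : ℝ) / (n : ℝ) ^ (j + 1))).comp (continuous_apply j))
    (summable_geometric_natCast_inv hn)
    fun j a => norm_natCast_div_pow_le (Finset.mem_range.mp (hAn (a j).2)) j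

lemma isCompact_digitCantor (hn : 1 < n) (hAn : A ⊆ Finset.range n) :
    IsCompact (digitCantor n A) :=
  digitCantor_eq_range ▸ isCompact_range (continuous_digitExpansion hn hAn)

lemma digitCantor_nonempty (hA : A.Nonempty) : (digitCantor n A).Nonempty :=
  digitCantor_eq_range ▸ range_nonempty_iff_nonempty.mpr ⟨fun _ => ⟨_, hA.choose_spec⟩⟩

lemma add_div_mem_digitCantor (hn : 1 < n) (hAn : A ⊆ Finset.range n) {d : ℕ} (hd : d ∈ A)
    {x : ℝ} (hx : x ∈ digitCantor n A) : (d + x) / n ∈ digitCantor n A := by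
  obtain ⟨a, ha, rfl⟩ := hx
  let a' : ℕ → ℕ := fun j => Nat.casesOn j d a
  have ha' : ∀ j, a' j ∈ A := fun j => by cases j <;> simp [a', hd, ha]
  refine ⟨a', ha', ?_⟩
  rw [(summable_digit_div_pow hn fun j => Finset.mem_range.mp (hAn (ha' j))).tsum_eq_zero_add]
  simp only [a', pow_succ _ (_ + 1), ← div_div, tsum_div_const, zero_add, pow_one, add_div]
  rfl

end DigitCantor

section DiffSet

variable {ι : Type*} {C : Set ℝ}

def diffSet (C : Set ℝ) (ι : Type*) : Set (ι → ℝ) :=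
  {v | ∃ x₀ ∈ C, ∃ x : ι → ℝ, (∀ i, x i ∈ C) ∧ v = fun i => x₀ - x i}

lemma diffSet_eq_image :
    diffSet C ι = (fun p : ℝ × (ι → ℝ) => fun i => p.1 - p.2 i) '' (C ×ˢ univ.pi fun _ => C) := by
  ext v
  constructor
  · rintro ⟨x₀, hx₀, x, hx, rfl⟩
    exact ⟨(x₀, x), ⟨hx₀, fun i _ => hx i⟩, rfl⟩
  · rintro ⟨⟨x₀, x⟩, ⟨hx₀, hx⟩, rfl⟩
    exact ⟨x₀, hx₀, x, fun i => hx i (mem_univ i), rfl⟩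

lemma IsCompact.diffSet (hC : IsCompact C) : IsCompact (diffSet C ι) :=
  diffSet_eq_image ▸ (hC.prod (isCompact_univ_pi fun _ => hC)).image (by fun_prop)

lemma diffSet_nonempty (hC : C.Nonempty) : (diffSet C ι).Nonempty :=
  ⟨0, hC.choose, hC.choose_spec, fun _ => hC.choose, fun _ => hC.choose_spec,
    funext fun _ => (sub_self _).symm⟩

lemma add_mem_diffSet_add_intLattice {x z : ι → ℝ} (hx : x ∈ diffSet C ι + intLattice ι)
    (hz : z ∈ intLattice ι) : x + z ∈ diffSet C ι + intLattice ι := by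
  obtain ⟨v, hv, w, hw, rfl⟩ := hx
  exact ⟨v, hv, w + z, add_mem_intLattice hw hz, (add_assoc v w z).symm⟩

lemma inv_smul_mem_diffSet_add_intLattice {n : ℕ} [NeZero n] {A : Finset ℕ}
    (hC : ∀ d ∈ A, ∀ x ∈ C, (d + x) / (n : ℝ) ∈ C)
    (hdiff : ∀ v : ι → ZMod n, ∃ a₀ ∈ A, ∃ a : ι → ℕ,
      (∀ i, a i ∈ A) ∧ v = fun i => (a₀ : ZMod n) - (a i : ZMod n))
    {x : ι → ℝ} (hx : x ∈ diffSet C ι + intLattice ι) :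
    (n : ℝ)⁻¹ • x ∈ diffSet C ι + intLattice ι := by
  obtain ⟨_, ⟨x₀, hx₀, y, hy, rfl⟩, _, ⟨m, rfl⟩, rfl⟩ := hx
  obtain ⟨a₀, ha₀, a, ha, hm⟩ := hdiff fun i => m i
  have hq : ∀ i, ∃ q : ℤ, m i = a₀ - a i + n * q := fun i => by
    obtain ⟨q, hq⟩ := (ZMod.intCast_zmod_eq_zero_iff_dvd (m i - (a₀ - a i)) n).mp <| by
      push_cast
      rw [congrFun hm i, sub_self]
    exact ⟨q, by lia⟩
  choose q hq using hq
  -- `(x₀ - y + m) / n = (a₀ + x₀) / n - (a + y) / n + q`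
  refine ⟨_, ⟨(a₀ + x₀) / n, hC a₀ ha₀ x₀ hx₀, fun i => (a i + y i) / n,
    fun i => hC (a i) (ha i) (y i) (hy i), rfl⟩, _, ⟨q, rfl⟩, ?_⟩
  ext i
  have hn : (n : ℝ) ≠ 0 := NeZero.ne _
  simp only [Pi.add_apply, Pi.smul_apply, Pi.map_apply, smul_eq_mul, hq i]
  push_cast
  field_simp
  ring

end DiffSet

theorem stmt12_general (n : ℕ) (hn : 3 ≤ n) (A : Finset ℕ)
    (hAn : A ⊆ Finset.range n) (k : ℕ)
    (hdiff : {v : Fin k → ZMod n | ∃ a₀ ∈ A, ∃ a : Fin k → ℕ,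
        (∀ i, a i ∈ A) ∧ v = fun i => ((a₀ : ZMod n) - (a i : ZMod n))} = Set.univ) :
    0 < volume {v : Fin k → ℝ | ∃ x₀ ∈ digitCantor n A, ∃ x : Fin k → ℝ,
        (∀ i, x i ∈ digitCantor n A) ∧ v = fun i => x₀ - x i} := by
  have hn1 : 1 < n := by omega
  have : NeZero n := ⟨by omega⟩
  have hdiff' := eq_univ_iff_forall.mp hdiff
  obtain ⟨a₀, ha₀, -⟩ := hdiff' 0
  have hcompact := isCompact_digitCantor hn1 hAn
  change 0 < volume (diffSet (digitCantor n A) (Fin k))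
  refine volume_pos_of_add_intLattice_eq_univ <| eq_univ_of_isClosed_of_smul_mem
    (c := (n : ℝ)⁻¹) (by positivity) (inv_lt_one_of_one_lt₀ (by exact_mod_cast hn1))
    (isClosed_intLattice.add_left_of_isCompact hcompact.diffSet)
    ((diffSet_nonempty (digitCantor_nonempty ⟨a₀, ha₀⟩)).add ⟨0, 0, funext fun _ => Int.cast_zero⟩)
    (fun _ hx _ hz => add_mem_diffSet_add_intLattice hx hz)
    (fun _ => inv_smul_mem_diffSet_add_intLattice
      (fun _ hd _ => add_div_mem_digitCantor hn1 hAn hd) hdiff')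

theorem stmt12 (n : ℕ) (hn : 3 ≤ n) (A : Finset ℕ) (hA : A.Nonempty)
    (hAn : A ⊆ Finset.range n) (k : ℕ) (hk : 1 ≤ k)
    (hdiff : {v : Fin k → ZMod n | ∃ a₀ ∈ A, ∃ a : Fin k → ℕ,
        (∀ i, a i ∈ A) ∧ v = fun i => ((a₀ : ZMod n) - (a i : ZMod n))} = Set.univ) :
    0 < volume {v : Fin k → ℝ | ∃ x₀ ∈ digitCantor n A, ∃ x : Fin k → ℝ,
        (∀ i, x i ∈ digitCantor n A) ∧ v = fun i => x₀ - x i} :=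
  stmt12_general n hn A hAn k hdiff
end

section
/- Fix an integer J > 2 and a real number r with 2/(3J) ≤ r ≤ 1/J. Let V = {(0,0), (0,J), (J,0), (J,2J), (2J,J), (2J,2J)} ⊂ ℝ² and let A_l = conv({(0,0), (1,1), (1,0)}). Then A_l ⊂ r·conv(V) + {(0,0), (0,−1)}. -/
/-!
With `s = r * J ≥ 2/3` and `H = unitHexagon`, `V = J • H`, so `r • conv V = s • conv H`,
and `conv H` is the hexagon `{0 ≤ x ≤ 2, 0 ≤ y ≤ 2, |x - y| ≤ 1}`. A point `(x, y)` of the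
triangle with `x - y ≤ s` lies in `s • conv H`; otherwise `(x, y + 1)` does, since
`y + 1 < 2 - s ≤ 2 * s` and `x - y > s ≥ 1 - s`.
-/

open Set Pointwise

theorem Convex.add_smul_mem_of_zero_mem {𝕜 E : Type*} [Field 𝕜] [LinearOrder 𝕜]
    [IsStrictOrderedRing 𝕜] [AddCommGroup E] [Module 𝕜 E] {s : Set E} (hs : Convex 𝕜 s)
    (zero_mem : (0 : E) ∈ s) {x y : E} (hx : x ∈ s) (hy : y ∈ s) {a b : 𝕜} (ha : 0 ≤ a)
    (hb : 0 ≤ b) (hab : a + b ≤ 1) : a • x + b • y ∈ s := by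
  obtain ⟨z, hz, hz_eq⟩ := hs.exists_mem_add_smul_eq hx hy ha hb
  rw [← hz_eq]
  exact hs.smul_mem_of_zero_mem zero_mem hz ⟨add_nonneg ha hb, hab⟩

def unitHexagon : Set (ℝ × ℝ) :=
  {(0, 0), (0, 1), (1, 0), (1, 2), (2, 1), (2, 2)}

theorem mem_convexHull_unitHexagon {x y : ℝ} (hx₀ : 0 ≤ x) (hx₂ : x ≤ 2) (hy₀ : 0 ≤ y)
    (hy₂ : y ≤ 2) (hxy : x - y ≤ 1) (hyx : y - x ≤ 1) : (x, y) ∈ convexHull ℝ unitHexagon := by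
  -- Every point lies in one of the four triangles of the fan of the hexagon at the origin.
  have fan : ∀ u ∈ unitHexagon, ∀ v ∈ unitHexagon, ∀ a b : ℝ, 0 ≤ a → 0 ≤ b → a + b ≤ 1 →
      a • u + b • v = (x, y) → (x, y) ∈ convexHull ℝ unitHexagon := by
    intro u hu v hv a b ha hb hab h
    rw [← h]
    exact (convex_convexHull ℝ _).add_smul_mem_of_zero_mem
      (subset_convexHull ℝ _ (by simp [unitHexagon, Prod.zero_eq_mk])) (subset_convexHull ℝ _ hu)
      (subset_convexHull ℝ _ hv) ha hb hab
  rcases le_total y x with hyx' | hxy'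
  · rcases le_total x (2 * y) with h | h
    · exact fan (2, 1) (by simp [unitHexagon]) (2, 2) (by simp [unitHexagon])
        (x - y) ((2 * y - x) / 2) (by linarith) (by linarith) (by linarith)
        (by ext <;> simp <;> ring)
    · exact fan (1, 0) (by simp [unitHexagon]) (2, 1) (by simp [unitHexagon])
        (x - 2 * y) y (by linarith) hy₀ (by linarith) (by ext <;> simp; ring)
  · rcases le_total y (2 * x) with h | h
    · exact fan (1, 2) (by simp [unitHexagon]) (2, 2) (by simp [unitHexagon])
        (y - x) ((2 * x - y) / 2) (by linarith) (by linarith) (by linarith)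
        (by ext <;> simp <;> ring)
    · exact fan (0, 1) (by simp [unitHexagon]) (1, 2) (by simp [unitHexagon])
        (y - 2 * x) x (by linarith) hx₀ (by linarith) (by ext <;> simp; ring)

theorem mem_smul_convexHull_unitHexagon {s x y : ℝ} (hs : 0 < s) (hx₀ : 0 ≤ x) (hx₂ : x ≤ 2 * s)
    (hy₀ : 0 ≤ y) (hy₂ : y ≤ 2 * s) (hxy : x - y ≤ s) (hyx : y - x ≤ s) :
    (x, y) ∈ s • convexHull ℝ unitHexagon := by
  have h := mem_convexHull_unitHexagon (x := x / s) (y := y / s) (by positivity)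
    ((div_le_iff₀ hs).2 hx₂) (by positivity) ((div_le_iff₀ hs).2 hy₂)
    (by rw [← sub_div, div_le_one hs]; exact hxy) (by rw [← sub_div, div_le_one hs]; exact hyx)
  convert smul_mem_smul_set h using 1
  ext <;> simp [mul_div_cancel₀ _ hs.ne']

theorem convexHull_triangle_subset :
    convexHull ℝ {((0 : ℝ), (0 : ℝ)), ((1 : ℝ), (1 : ℝ)), ((1 : ℝ), (0 : ℝ))} ⊆
      {p : ℝ × ℝ | 0 ≤ p.2 ∧ p.2 ≤ p.1 ∧ p.1 ≤ 1} := by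
  refine convexHull_min ?_ ?_
  · rintro p (rfl | rfl | rfl) <;> norm_num
  · rintro ⟨x₁, y₁⟩ ⟨h₁, h₂, h₃⟩ ⟨x₂, y₂⟩ ⟨h₄, h₅, h₆⟩ a b ha hb hab
    simp only [Prod.smul_mk, Prod.mk_add_mk, smul_eq_mul]
    refine ⟨by positivity, by nlinarith, by nlinarith⟩

theorem stmt17_general (J : ℕ) (hJ : 2 < J) (r : ℝ)
    (hr1 : 2 / (3 * (J : ℝ)) ≤ r)
    (V : Set (ℝ × ℝ))
    (hV : V = {((0 : ℝ), (0 : ℝ)), (0, (J : ℝ)), ((J : ℝ), 0), ((J : ℝ), 2 * (J : ℝ)),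
      (2 * (J : ℝ), (J : ℝ)), (2 * (J : ℝ), 2 * (J : ℝ))}) :
    convexHull ℝ {((0 : ℝ), (0 : ℝ)), ((1 : ℝ), (1 : ℝ)), ((1 : ℝ), (0 : ℝ))} ⊆
      r • convexHull ℝ V + ({((0 : ℝ), (0 : ℝ)), ((0 : ℝ), (-1 : ℝ))} : Set (ℝ × ℝ)) := by
  have hJ₀ : (0 : ℝ) < J := Nat.cast_pos.2 (by omega)
  have hs : 2 / 3 ≤ r * J := by rw [div_le_iff₀ (by positivity)] at hr1; linarith
  have hV' : r • convexHull ℝ V = (r * J) • convexHull ℝ unitHexagon := by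
    have : V = (J : ℝ) • unitHexagon := by simp [hV, unitHexagon, smul_set_insert, mul_comm]
    rw [this, convexHull_smul, smul_smul]
  rw [hV']
  rintro ⟨x, y⟩ hp
  obtain ⟨hy₀, hyx, hx₁⟩ := convexHull_triangle_subset hp
  by_cases h : x - y ≤ r * J
  · exact mem_add.2 ⟨(x, y), mem_smul_convexHull_unitHexagon (by linarith) (by linarith)
      (by linarith) hy₀ (by linarith) h (by linarith), (0, 0), by simp, by simp⟩
  · exact mem_add.2 ⟨(x, y + 1), mem_smul_convexHull_unitHexagon (by linarith) (by linarith)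
      (by linarith) (by linarith) (by linarith) (by linarith) (by linarith), (0, -1), by simp,
      by simp⟩

theorem stmt17 (J : ℕ) (hJ : 2 < J) (r : ℝ)
    (hr1 : 2 / (3 * (J : ℝ)) ≤ r) (hr2 : r ≤ 1 / (J : ℝ))
    (V : Set (ℝ × ℝ))
    (hV : V = {((0 : ℝ), (0 : ℝ)), (0, (J : ℝ)), ((J : ℝ), 0), ((J : ℝ), 2 * (J : ℝ)),
      (2 * (J : ℝ), (J : ℝ)), (2 * (J : ℝ), 2 * (J : ℝ))}) :
    convexHull ℝ {((0 : ℝ), (0 : ℝ)), ((1 : ℝ), (1 : ℝ)), ((1 : ℝ), (0 : ℝ))} ⊆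
      r • convexHull ℝ V + ({((0 : ℝ), (0 : ℝ)), ((0 : ℝ), (-1 : ℝ))} : Set (ℝ × ℝ)) :=
  stmt17_general J hJ r hr1 V hV
end

section
/- Let d ≥ 1, r ∈ (0,1), and b_0 = 0, b_1, …, b_J ∈ ℝ^d with {b_1, …, b_d} linearly independent. Let k be a positive integer with d ≤ (k+1)·r, and for F ⊂ ℝ^d define T(F) = ⋃_{j=0}^J (r·F + b_j). If K_n ⊂ ℝ^d satisfies conv({(k+1)b_0, (k+1)b_1, …, (k+1)b_d}) ⊂ k·K_n (the k-fold sumset of K_n), then conv({(k+1)b_0, (k+1)b_1, …, (k+1)b_d}) ⊂ k·T(K_n). -/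
open Set Pointwise

/-!
Write a point of the simplex as `x = ∑ μᵢ bᵢ` with `μᵢ ≥ 0`, `∑ μᵢ = k + 1`, and round each weight
down to a natural number `cᵢ = ⌈μᵢ⌉₊ - 1`: then `μᵢ - cᵢ ≤ 1`, and `cᵢ < μᵢ` whenever `μᵢ > 0`, so
`∑ cᵢ ≤ k`. Now `x = r • x' + ∑ cᵢ bᵢ` with `x' = ∑ ((μᵢ - cᵢ) / r) bᵢ`. The weights of `x'` on
`b₁, …, b_d` add up to at most `d / r ≤ k + 1`, and `b₀ = 0` absorbs the rest, so `x'` lies in the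
simplex again and is a sum of `k` points of `Kₙ`. Padding with `b₀ = 0`, `∑ cᵢ bᵢ` is a sum of `k`
of the `bⱼ`, and pairing the summands writes `x` as a sum of `k` points of `T(Kₙ)`.
-/

theorem convexHull_range_eq_image_stdSimplex {ι E : Type*} [Fintype ι] [AddCommGroup E]
    [Module ℝ E] (v : ι → E) :
    convexHull ℝ (range v) = (fun w => ∑ i, w i • v i) '' stdSimplex ℝ ι := by
  classical
  have hL : (fun w : ι → ℝ => ∑ i, w i • v i) = Fintype.linearCombination ℝ v :=
    funext fun w => (Fintype.linearCombination_apply ℝ v w).symm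
  rw [← convexHull_basis_eq_stdSimplex, hL, LinearMap.image_convexHull, ← range_comp]
  congr
  funext i
  simp [Fintype.linearCombination_apply, ite_smul]

theorem mem_convexHull_range_smul_iff {ι E : Type*} [Fintype ι] [AddCommGroup E]
    [Module ℝ E] {K : ℝ} (hK : 0 < K) (v : ι → E) (x : E) :
    x ∈ convexHull ℝ (range fun i => K • v i) ↔
      ∃ μ : ι → ℝ, (∀ i, 0 ≤ μ i) ∧ ∑ i, μ i = K ∧ ∑ i, μ i • v i = x := by
  rw [convexHull_range_eq_image_stdSimplex]
  constructor
  · rintro ⟨w, ⟨hw₀, hw₁⟩, rfl⟩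
    refine ⟨K • w, fun i => mul_nonneg hK.le (hw₀ i), ?_, ?_⟩
    · simp [← Finset.mul_sum, hw₁]
    · simp [smul_smul, mul_comm]
  · rintro ⟨μ, hμ₀, hμK, rfl⟩
    refine ⟨K⁻¹ • μ, ⟨fun i => mul_nonneg (inv_nonneg.2 hK.le) (hμ₀ i), ?_⟩, ?_⟩
    · simp [← Finset.mul_sum, hμK, hK.ne']
    · simp [smul_smul, mul_comm, hK.ne']

theorem sum_smul_mem_convexHull_range_smul {ι E : Type*} [Fintype ι] [DecidableEq ι]
    [AddCommGroup E] [Module ℝ E] {K : ℝ} (hK : 0 < K) {v : ι → E} {i₀ : ι} (hv : v i₀ = 0)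
    {ν : ι → ℝ} (hν : ∀ i ≠ i₀, 0 ≤ ν i) (hsum : ∑ i ∈ Finset.univ.erase i₀, ν i ≤ K) :
    ∑ i, ν i • v i ∈ convexHull ℝ (range fun i => K • v i) := by
  rw [mem_convexHull_range_smul_iff hK]
  refine ⟨Function.update ν i₀ (K - ∑ i ∈ Finset.univ.erase i₀, ν i), ?_, ?_, ?_⟩
  · intro i
    rcases eq_or_ne i i₀ with rfl | hi
    · simpa using hsum
    · simpa [hi] using hν i hi
  · rw [Finset.sum_update_of_mem (Finset.mem_univ _), ← Finset.erase_eq]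
    ring
  · refine Finset.sum_congr rfl fun i _ => ?_
    rcases eq_or_ne i i₀ with rfl | hi
    · simp [hv]
    · simp [hi]

theorem Nat.cast_ceil_sub_one_lt {R : Type*} [Semiring R] [LinearOrder R] [FloorSemiring R]
    {a : R} (ha : 0 < a) : ((⌈a⌉₊ - 1 : ℕ) : R) < a :=
  Nat.lt_ceil.1 (Nat.sub_one_lt (Nat.ceil_pos.2 ha).ne')

theorem Nat.le_cast_ceil_sub_one_add_one {R : Type*} [Semiring R] [LinearOrder R]
    [IsStrictOrderedRing R] [FloorSemiring R] (a : R) : a ≤ ((⌈a⌉₊ - 1 : ℕ) : R) + 1 :=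
  calc a ≤ ⌈a⌉₊ := Nat.le_ceil a
    _ ≤ ((⌈a⌉₊ - 1 + 1 : ℕ) : R) := Nat.cast_le.2 le_tsub_add
    _ = _ := Nat.cast_succ _

theorem exists_nat_le_le_add_one_sum_le {ι : Type*} [Fintype ι] {μ : ι → ℝ}
    (hμ : ∀ i, 0 ≤ μ i) {k : ℕ} (hsum : ∑ i, μ i ≤ k + 1) :
    ∃ c : ι → ℕ, (∀ i, (c i : ℝ) ≤ μ i ∧ μ i ≤ c i + 1) ∧ ∑ i, c i ≤ k := by
  have hc_le (i : ι) : ((⌈μ i⌉₊ - 1 : ℕ) : ℝ) ≤ μ i := by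
    rcases (hμ i).eq_or_lt with h | h
    · simp [← h]
    · exact (Nat.cast_ceil_sub_one_lt h).le
  refine ⟨fun i => ⌈μ i⌉₊ - 1, fun i => ⟨hc_le i, Nat.le_cast_ceil_sub_one_add_one _⟩, ?_⟩
  by_cases hpos : ∃ i, 0 < μ i
  · obtain ⟨i, hi⟩ := hpos
    have : ((∑ i, (⌈μ i⌉₊ - 1) : ℕ) : ℝ) < k + 1 :=
      calc ((∑ i, (⌈μ i⌉₊ - 1) : ℕ) : ℝ) = ∑ i, ((⌈μ i⌉₊ - 1 : ℕ) : ℝ) := Nat.cast_sum _ _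
        _ < ∑ i, μ i :=
          Finset.sum_lt_sum (fun i _ => hc_le i) ⟨i, Finset.mem_univ i, Nat.cast_ceil_sub_one_lt hi⟩
        _ ≤ k + 1 := hsum
    exact Nat.lt_succ_iff.1 (by exact_mod_cast this)
  · simp only [not_exists, not_lt] at hpos
    simp [fun i => le_antisymm (hpos i) (hμ i)]

section kSum

variable {M : Type*} [AddCommMonoid M] {k : ℕ} {A B : Set M}

theorem kSum_mono (h : A ⊆ B) : kSum k A ⊆ kSum k B := by
  rintro x ⟨f, hf, rfl⟩
  exact ⟨f, fun i => h (hf i), rfl⟩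

theorem add_mem_kSum_s18 {a b : M} (ha : a ∈ kSum k A) (hb : b ∈ kSum k B) :
    a + b ∈ kSum k (A + B) := by
  obtain ⟨f, hf, rfl⟩ := ha
  obtain ⟨g, hg, rfl⟩ := hb
  exact ⟨f + g, fun i => add_mem_add (hf i) (hg i), Finset.sum_add_distrib.symm⟩

theorem smul_mem_kSum {R : Type*} [Monoid R] [DistribMulAction R M] {a : M} (r : R)
    (ha : a ∈ kSum k A) : r • a ∈ kSum k (r • A) := by
  obtain ⟨f, hf, rfl⟩ := ha
  exact ⟨r • f, fun i => smul_mem_smul_set (hf i), Finset.smul_sum⟩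

theorem list_sum_mem_kSum (l : List M) (hl : ∀ a ∈ l, a ∈ A) : l.sum ∈ kSum l.length A :=
  ⟨l.get, fun i => hl _ (List.get_mem _ _), by rw [← List.sum_ofFn, List.ofFn_get]⟩

theorem sum_nsmul_mem_kSum {ι : Type*} [Fintype ι] (g : ι → M) {i₀ : ι} (hg : g i₀ = 0)
    {c : ι → ℕ} (hc : ∑ i, c i ≤ k) : ∑ i, c i • g i ∈ kSum k (range g) := by
  let s := (∑ i, Multiset.replicate (c i) (g i)) + Multiset.replicate (k - ∑ i, c i) (g i₀)
  have hs : ∀ a ∈ s.toList, a ∈ range g := by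
    simp only [s, Multiset.mem_toList, Multiset.mem_add, Multiset.mem_sum, Multiset.mem_replicate]
    rintro a (⟨i, -, -, rfl⟩ | ⟨-, rfl⟩) <;> exact mem_range_self _
  simpa [s, Multiset.card_sum, Multiset.sum_sum, hg, Nat.add_sub_cancel' hc] using
    list_sum_mem_kSum s.toList hs

end kSum

theorem image_setOf_le_eq_range_fin {α : Type*} (f : ℕ → α) (n : ℕ) :
    f '' {i | i ≤ n} = range fun i : Fin (n + 1) => f i := by
  ext; simp [Fin.exists_iff]

theorem stmt18_general (d J k : ℕ) (hdJ : d ≤ J)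
    (r : ℝ) (hr0 : 0 < r)
    (b : ℕ → EuclideanSpace ℝ (Fin d)) (hb0 : b 0 = 0)
    (hkr : (d : ℝ) ≤ ((k : ℝ) + 1) * r)
    (Kn : Set (EuclideanSpace ℝ (Fin d)))
    (h : convexHull ℝ ((fun i : ℕ => ((k : ℝ) + 1) • b i) '' {i | i ≤ d}) ⊆ kSum k Kn) :
    convexHull ℝ ((fun i : ℕ => ((k : ℝ) + 1) • b i) '' {i | i ≤ d}) ⊆
      kSum k (⋃ j ∈ Finset.range (J + 1), (fun x => r • x + b j) '' Kn) := by
  let v : Fin (d + 1) → EuclideanSpace ℝ (Fin d) := fun i => b i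
  have hv0 : v 0 = 0 := hb0
  have hK : (0 : ℝ) < k + 1 := by positivity
  rw [image_setOf_le_eq_range_fin] at h ⊢
  rintro _ hx
  obtain ⟨μ, hμ₀, hμK, rfl⟩ := (mem_convexHull_range_smul_iff hK v _).1 hx
  obtain ⟨c, hc, hck⟩ := exists_nat_le_le_add_one_sum_le hμ₀ hμK.le
  set ν : Fin (d + 1) → ℝ := fun i => (μ i - c i) / r
  have hν : ∑ i, ν i • v i ∈ convexHull ℝ (range fun i => ((k : ℝ) + 1) • v i) := by
    refine sum_smul_mem_convexHull_range_smul hK hv0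
      (fun i _ => div_nonneg (sub_nonneg.2 (hc i).1) hr0.le) ?_
    calc ∑ i ∈ Finset.univ.erase 0, ν i ≤ ∑ i ∈ Finset.univ.erase (0 : Fin (d + 1)), 1 / r :=
          Finset.sum_le_sum fun i _ =>
            div_le_div_of_nonneg_right (by linarith [(hc i).2]) hr0.le
      _ = d / r := by simp [Finset.card_erase_of_mem, div_eq_mul_inv]
      _ ≤ k + 1 := (div_le_iff₀ hr0).2 hkr
  have hdecomp : ∑ i, μ i • v i = r • ∑ i, ν i • v i + ∑ i, c i • v i := by
    simp only [Finset.smul_sum, smul_smul, ← Nat.cast_smul_eq_nsmul ℝ, ← Finset.sum_add_distrib,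
      ← add_smul, ν]
    refine Finset.sum_congr rfl fun i _ => ?_
    congr 1
    field_simp
    ring
  rw [hdecomp]
  refine kSum_mono ?_ (add_mem_kSum_s18 (smul_mem_kSum r (h hν)) (sum_nsmul_mem_kSum v hv0 hck))
  rintro _ ⟨_, ⟨y, hy, rfl⟩, _, ⟨i, rfl⟩, rfl⟩
  exact mem_iUnion₂.2 ⟨i, Finset.mem_range.2 (by omega), y, hy, rfl⟩

theorem stmt18 (d J k : ℕ) (hd : 1 ≤ d) (hdJ : d ≤ J)
    (r : ℝ) (hr0 : 0 < r) (hr1 : r < 1)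
    (b : ℕ → EuclideanSpace ℝ (Fin d)) (hb0 : b 0 = 0)
    (hli : LinearIndependent ℝ (fun i : Fin d => b ((i : ℕ) + 1)))
    (hk : 1 ≤ k) (hkr : (d : ℝ) ≤ ((k : ℝ) + 1) * r)
    (Kn : Set (EuclideanSpace ℝ (Fin d)))
    (h : convexHull ℝ ((fun i : ℕ => ((k : ℝ) + 1) • b i) '' {i | i ≤ d}) ⊆ kSum k Kn) :
    convexHull ℝ ((fun i : ℕ => ((k : ℝ) + 1) • b i) '' {i | i ≤ d}) ⊆
      kSum k (⋃ j ∈ Finset.range (J + 1), (fun x => r • x + b j) '' Kn) :=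
  stmt18_general d J k hdJ r hr0 b hb0 hkr Kn h
end
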